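/- arXiv:2409.20521 — 7 statements merged into one kernel-verified Lean document; each statement's English description precedes it below -/
import Mathlib

section
/- Let S be a measurable space in which all singleton sets are measurable, μ⁰ a probability measure on S, ρ ∈ [0,1], H > 0, and V : S → ℝ a measurable function with 0 ≤ V(s) ≤ H for all s and V(s_f) = 0 for some s_f ∈ S. Then the worst-case expectation over the TV uncertainty set satisfies inf_{μ ∈ 𝒰^ρ(μ⁰)} ∫ V dμ = sup_{α ∈ [0,H]} ( ∫ [V]_α dμ⁰ − ρ·α ), and the supremum on the right-hand side is attained. -/
open MeasureTheory

/-- The TV uncertainty set around a probability measure `μ0` at level `ρ`: all probability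
measures `μ` with `D_TV(μ, μ0) = sup_A |μ(A) − μ0(A)| ≤ ρ`. -/
def tvUncertaintySet {S : Type*} [MeasurableSpace S] (μ0 : Measure S) (ρ : ℝ) :
    Set (Measure S) :=
  {μ | IsProbabilityMeasure μ ∧
    ∀ A : Set S, MeasurableSet A → |(μ A).toReal - (μ0 A).toReal| ≤ ρ}

/-!
Weak duality: for `0 ≤ g ≤ α` the layer-cake formula writes `∫ g dμ0 - ∫ g dμ` as
`∫₀^α (μ0 {t ≤ g} - μ {t ≤ g}) dt ≤ ρ α`; with `g = min V α` this bounds every dual value by every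
primal value. Strong duality: at an upper `ρ`-quantile `α` of `V`, take mass `ρ` of `μ0` off
`{α ≤ V}` (all of `{α < V}` and a fraction of `{V = α}`) and put it on the fail state. The result
lies in the TV ball and its value is `∫ min V α dμ0 - ρ α`, so both extrema are attained.
-/

open Set ENNReal

section Levels

variable {S : Type*} [MeasurableSpace S] {μ : Measure S} {V : S → ℝ} {α : ℝ} {r : ℝ≥0∞}

lemma measure_lt_le_of_forall_gt (h : ∀ β, α < β → μ {s | β < V s} ≤ r) :
    μ {s | α < V s} ≤ r := by
  obtain ⟨u, hu_anti, hu_gt, hu_lim⟩ := exists_seq_strictAnti_tendsto α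
  have hunion : {s | α < V s} = ⋃ n, {s | u n < V s} := by
    ext s
    simp only [mem_ofPred_eq, mem_iUnion]
    exact ⟨fun hs => (hu_lim.eventually (gt_mem_nhds hs)).exists,
      fun ⟨n, hn⟩ => (hu_gt n).trans hn⟩
  have hmono : Monotone fun n => {s | u n < V s} :=
    fun n m hnm s hs => (hu_anti.antitone hnm).trans_lt hs
  rw [hunion, hmono.measure_iUnion]
  exact iSup_le fun n => h _ (hu_gt n)

lemma le_measure_le_of_forall_lt [IsFiniteMeasure μ] (hV : Measurable V)
    (h : ∀ β < α, r ≤ μ {s | β < V s}) : r ≤ μ {s | α ≤ V s} := by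
  obtain ⟨u, hu_mono, hu_lt, hu_lim⟩ := exists_seq_strictMono_tendsto α
  have hinter : {s | α ≤ V s} = ⋂ n, {s | u n < V s} := by
    ext s
    simp only [mem_ofPred_eq, mem_iInter]
    exact ⟨fun hs n => (hu_lt n).trans_le hs,
      fun hs => le_of_tendsto' hu_lim fun n => (hs n).le⟩
  have hanti : Antitone fun n => {s | u n < V s} :=
    fun n m hnm s hs => (hu_mono.monotone hnm).trans_lt hs
  rw [hinter, hanti.measure_iInter
    (fun n => (measurableSet_lt measurable_const hV).nullMeasurableSet) ⟨0, measure_ne_top _ _⟩]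
  exact le_iInf fun n => h _ (hu_lt n)

/-- An upper `r`-quantile of `V` under `μ`. -/
lemma exists_mem_Icc_measure_lt_le_le_measure_le [IsProbabilityMeasure μ] (hV : Measurable V)
    {H : ℝ} (hH : 0 ≤ H) (hV0 : ∀ s, 0 ≤ V s) (hVH : ∀ s, V s ≤ H) (hr : r ≤ 1) :
    ∃ α ∈ Icc 0 H, μ {s | α < V s} ≤ r ∧ r ≤ μ {s | α ≤ V s} := by
  set T := {β : ℝ | 0 ≤ β ∧ μ {s | β < V s} ≤ r}
  have hHT : H ∈ T := ⟨hH, by simp [(hVH _).not_gt]⟩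
  have hTbdd : BddBelow T := ⟨0, fun β hβ => hβ.1⟩
  refine ⟨sInf T, ⟨le_csInf ⟨H, hHT⟩ fun β hβ => hβ.1, csInf_le hTbdd hHT⟩, ?_, ?_⟩
  · refine measure_lt_le_of_forall_gt fun β hβ => ?_
    obtain ⟨t, htT, htβ⟩ := exists_lt_of_csInf_lt ⟨H, hHT⟩ hβ
    exact (measure_mono fun s hs => htβ.trans hs).trans htT.2
  · refine le_measure_le_of_forall_lt hV fun β hβ => ?_
    by_contra! hlt
    rcases lt_or_ge β 0 with hβ0 | hβ0
    · have huniv : {s | β < V s} = univ := eq_univ_of_forall fun s => hβ0.trans_le (hV0 s)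
      rw [huniv, measure_univ] at hlt
      exact (hr.trans_lt hlt).false
    · exact (csInf_le hTbdd ⟨hβ0, hlt.le⟩).not_gt hβ

end Levels

lemma ENNReal.exists_le_one_add_mul_eq {a e r : ℝ≥0∞} (he : e ≠ ∞) (har : a ≤ r)
    (hrae : r ≤ a + e) : ∃ c ≤ 1, a + c * e = r := by
  rcases eq_or_ne e 0 with rfl | he0
  · exact ⟨0, zero_le_one, by simpa using le_antisymm har (by simpa using hrae)⟩
  · refine ⟨(r - a) / e, ENNReal.div_le_of_le_mul (by rwa [one_mul, tsub_le_iff_left]), ?_⟩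
    rw [ENNReal.div_mul_cancel he0 he, add_tsub_cancel_of_le har]

section Split

variable {S : Type*} [MeasurableSpace S] {μ : Measure S} {V : S → ℝ} {α : ℝ} {r : ℝ≥0∞}

/-- The atom `{V = α}` is shared between `κ` and `ν` in proportions `1 - c : c`. -/
lemma exists_eq_add_ae_le_ae_ge [IsFiniteMeasure μ] (hV : Measurable V)
    (hgt : μ {s | α < V s} ≤ r) (hge : r ≤ μ {s | α ≤ V s}) :
    ∃ κ ν : Measure S, μ = κ + ν ∧ ν univ = r ∧ (∀ᵐ s ∂κ, V s ≤ α) ∧ ∀ᵐ s ∂ν, α ≤ V s := by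
  set A := {s | α < V s}
  set E := {s | V s = α}
  set C := {s | V s < α}
  have hA : MeasurableSet A := measurableSet_lt measurable_const hV
  have hE : MeasurableSet E := measurableSet_eq_fun hV measurable_const
  have hC : MeasurableSet C := measurableSet_lt hV measurable_const
  have hAE : Disjoint A E := disjoint_left.2 fun s hA hE => hA.ne' hE
  have hCc : Cᶜ = A ∪ E := by
    ext s
    simp only [C, A, E, mem_compl_iff, mem_union, mem_ofPred_eq, not_lt, le_iff_lt_or_eq, eq_comm]
  have hge' : r ≤ μ Cᶜ := by
    convert hge using 2
    ext s
    simp [C]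
  obtain ⟨c, hc1, hc⟩ := ENNReal.exists_le_one_add_mul_eq (measure_ne_top μ E) hgt
    (by rwa [← measure_union hAE hE, ← hCc])
  refine ⟨μ.restrict C + (1 - c) • μ.restrict E, μ.restrict A + c • μ.restrict E, ?_, ?_, ?_, ?_⟩
  · have hEsplit : μ.restrict E = (1 - c) • μ.restrict E + c • μ.restrict E := by
      rw [← add_smul, tsub_add_cancel_of_le hc1, one_smul]
    conv_lhs => rw [← Measure.restrict_add_restrict_compl (μ := μ) hC, hCc,
      Measure.restrict_union hAE hE, hEsplit]
    abel
  · simpa [mul_comm] using hc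
  · exact ae_add_measure_iff.2 ⟨ae_restrict_of_forall_mem hC fun s hs => hs.le,
      Measure.ae_smul_measure (ae_restrict_of_forall_mem hE fun s hs => hs.le) _⟩
  · exact ae_add_measure_iff.2 ⟨ae_restrict_of_forall_mem hA fun s hs => hs.le,
      Measure.ae_smul_measure (ae_restrict_of_forall_mem hE fun s hs => hs.ge) _⟩

end Split

section Integrals

variable {S : Type*} [MeasurableSpace S] {μ ν : Measure S} {g : S → ℝ} {α : ℝ}

lemma integrable_of_nonneg_of_le [IsFiniteMeasure μ] (hg : Measurable g) (hg0 : ∀ s, 0 ≤ g s)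
    (hgα : ∀ s, g s ≤ α) : Integrable g μ :=
  .of_bound hg.aestronglyMeasurable α
    (ae_of_all _ fun s => (Real.norm_of_nonneg (hg0 s)).trans_le (hgα s))

lemma integral_le_integral_add_mul [IsFiniteMeasure μ] [IsFiniteMeasure ν] {ρ : ℝ}
    (hg : Measurable g) (hg0 : ∀ s, 0 ≤ g s) (hgα : ∀ s, g s ≤ α) (hα : 0 ≤ α)
    (h : ∀ A, MeasurableSet A → μ.real A ≤ ν.real A + ρ) :
    ∫ s, g s ∂μ ≤ ∫ s, g s ∂ν + ρ * α := by
  have hlayer (m : Measure S) [IsFiniteMeasure m] :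
      IntegrableOn (fun t => m.real {s | t ≤ g s}) (Ioc 0 α) := by
    have hanti : Antitone fun t => m.real {s | t ≤ g s} :=
      fun t t' htt' => measureReal_mono fun s hs => htt'.trans hs
    exact (hanti.antitoneOn _).integrableOn_isCompact isCompact_Icc |>.mono_set Ioc_subset_Icc_self
  rw [(integrable_of_nonneg_of_le hg hg0 hgα).integral_eq_integral_Ioc_meas_le
      (ae_of_all _ hg0) (ae_of_all _ hgα),
    (integrable_of_nonneg_of_le hg hg0 hgα).integral_eq_integral_Ioc_meas_le
      (ae_of_all _ hg0) (ae_of_all _ hgα)]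
  calc ∫ t in Ioc 0 α, μ.real {s | t ≤ g s}
      ≤ ∫ t in Ioc 0 α, (ν.real {s | t ≤ g s} + ρ) :=
        setIntegral_mono_on (hlayer μ) ((hlayer ν).add (integrableOn_const measure_Ioc_lt_top.ne))
          measurableSet_Ioc fun t _ => h _ (measurableSet_le measurable_const hg)
    _ = (∫ t in Ioc 0 α, ν.real {s | t ≤ g s}) + ρ * α := by
        rw [integral_add (hlayer ν) (integrableOn_const measure_Ioc_lt_top.ne), setIntegral_const]
        simp [hα, mul_comm ρ]

lemma integral_min_add_measure [IsFiniteMeasure ν] (hg : Integrable g μ)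
    (hμ : ∀ᵐ s ∂μ, g s ≤ α) (hν : ∀ᵐ s ∂ν, α ≤ g s) :
    ∫ s, min (g s) α ∂(μ + ν) = ∫ s, g s ∂μ + ν.real univ * α := by
  have hμeq : (fun s => min (g s) α) =ᵐ[μ] g := hμ.mono fun s hs => min_eq_left hs
  have hνeq : (fun s => min (g s) α) =ᵐ[ν] fun _ => α := hν.mono fun s hs => min_eq_right hs
  rw [integral_add_measure (hg.congr hμeq.symm) ((integrable_const α).congr hνeq.symm),
    integral_congr_ae hμeq, integral_congr_ae hνeq, integral_const, smul_eq_mul]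

end Integrals

section Uncertainty

variable {S : Type*} [MeasurableSpace S] {μ0 : Measure S} [IsProbabilityMeasure μ0] {ρ : ℝ}

lemma add_mem_tvUncertaintySet {κ ν ν' : Measure S} (hρ : 0 ≤ ρ) (hμ0 : μ0 = κ + ν)
    (hν : ν univ = ENNReal.ofReal ρ) (hν' : ν' univ = ENNReal.ofReal ρ) :
    κ + ν' ∈ tvUncertaintySet μ0 ρ := by
  have : IsFiniteMeasure κ := isFiniteMeasure_of_le μ0 (hμ0 ▸ Measure.le_add_right le_rfl)
  have : IsFiniteMeasure ν := ⟨hν ▸ ofReal_lt_top⟩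
  have : IsFiniteMeasure ν' := ⟨hν' ▸ ofReal_lt_top⟩
  have hreal {m : Measure S} [IsFiniteMeasure m] (hm : m univ = ENNReal.ofReal ρ) (A : Set S) :
      m.real A ≤ ρ := by
    simpa [measureReal_def, hm, hρ] using measureReal_mono (μ := m) (subset_univ A)
  refine ⟨⟨by rw [Measure.add_apply, hν', ← hν, ← Measure.add_apply, ← hμ0, measure_univ]⟩,
    fun A _ => ?_⟩
  subst hμ0
  rw [← measureReal_def, ← measureReal_def, measureReal_add_apply, measureReal_add_apply,
    add_sub_add_left_eq_sub]
  exact abs_sub_le_of_nonneg_of_le measureReal_nonneg (hreal hν' A) measureReal_nonneg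
    (hreal hν A)

lemma integral_min_sub_mul_le_integral {μ : Measure S} {V : S → ℝ} {H α : ℝ}
    (hμ : μ ∈ tvUncertaintySet μ0 ρ) (hV : Measurable V) (hV0 : ∀ s, 0 ≤ V s)
    (hVH : ∀ s, V s ≤ H) (hα : 0 ≤ α) :
    ∫ s, min (V s) α ∂μ0 - ρ * α ≤ ∫ s, V s ∂μ := by
  obtain ⟨hprob, htv⟩ := hμ
  have hmin : Measurable fun s => min (V s) α := hV.min measurable_const
  have hweak := integral_le_integral_add_mul (μ := μ0) (ν := μ) (ρ := ρ) hmin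
    (fun s => le_min (hV0 s) hα) (fun s => min_le_right _ _) hα
    fun A hA => by linarith [(abs_le.1 (htv A hA)).1, measureReal_def μ A, measureReal_def μ0 A]
  have hmono : ∫ s, min (V s) α ∂μ ≤ ∫ s, V s ∂μ :=
    integral_mono (integrable_of_nonneg_of_le hmin (fun s => le_min (hV0 s) hα)
      fun s => (min_le_left _ _).trans (hVH s)) (integrable_of_nonneg_of_le hV hV0 hVH)
      fun s => min_le_left _ _
  linarith

end Uncertainty

theorem tv_duality_fail_state_general {S : Type*} [MeasurableSpace S]
    (μ0 : Measure S) [IsProbabilityMeasure μ0]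
    (ρ : ℝ) (hρ : ρ ∈ Set.Icc (0 : ℝ) 1) (H : ℝ)
    (V : S → ℝ) (hV : Measurable V) (hV0 : ∀ s, 0 ≤ V s) (hVH : ∀ s, V s ≤ H)
    (s_f : S) (hsf : V s_f = 0) :
    ∃ α ∈ Set.Icc (0 : ℝ) H,
      ((∫ s, min (V s) α ∂μ0) - ρ * α =
        sInf {x : ℝ | ∃ μ ∈ tvUncertaintySet μ0 ρ, x = ∫ s, V s ∂μ}) ∧
      ∀ α' ∈ Set.Icc (0 : ℝ) H,
        (∫ s, min (V s) α' ∂μ0) - ρ * α' ≤ (∫ s, min (V s) α ∂μ0) - ρ * α := by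
  obtain ⟨hρ0, hρ1⟩ := hρ
  obtain ⟨α, hα, hgt, hge⟩ := exists_mem_Icc_measure_lt_le_le_measure_le (μ := μ0) hV
    ((hV0 s_f).trans (hVH s_f)) hV0 hVH (ofReal_le_one.2 hρ1)
  obtain ⟨κ, ν, hμ0, hν, hκV, hνV⟩ := exists_eq_add_ae_le_ae_ge hV hgt hge
  have : IsFiniteMeasure κ := isFiniteMeasure_of_le μ0 (hμ0 ▸ Measure.le_add_right le_rfl)
  have : IsFiniteMeasure ν := ⟨hν ▸ ofReal_lt_top⟩
  set μstar := κ + ENNReal.ofReal ρ • Measure.dirac s_f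
  have hmem : μstar ∈ tvUncertaintySet μ0 ρ := add_mem_tvUncertaintySet hρ0 hμ0 hν (by simp)
  have hVκ : Integrable V κ := integrable_of_nonneg_of_le hV hV0 hVH
  have hval : ∫ s, V s ∂μstar = ∫ s, min (V s) α ∂μ0 - ρ * α := by
    rw [integral_add_measure hVκ ((integrable_of_nonneg_of_le hV hV0 hVH).smul_measure
        ofReal_ne_top), integral_smul_measure, integral_dirac' _ _ hV.stronglyMeasurable, hsf,
      hμ0, integral_min_add_measure hVκ hκV hνV, measureReal_def, hν, toReal_ofReal hρ0]
    ring
  have hweak (μ) (hμ : μ ∈ tvUncertaintySet μ0 ρ) (α') (hα' : α' ∈ Icc 0 H) :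
      ∫ s, min (V s) α' ∂μ0 - ρ * α' ≤ ∫ s, V s ∂μ :=
    integral_min_sub_mul_le_integral hμ hV hV0 hVH hα'.1
  have hleast : IsLeast {x : ℝ | ∃ μ ∈ tvUncertaintySet μ0 ρ, x = ∫ s, V s ∂μ}
      (∫ s, min (V s) α ∂μ0 - ρ * α) := by
    refine ⟨⟨μstar, hmem, hval.symm⟩, ?_⟩
    rintro _ ⟨μ, hμ, rfl⟩
    exact hweak μ hμ α hα
  exact ⟨α, hα, hleast.csInf_eq.symm, fun α' hα' => hval ▸ hweak μstar hmem α' hα'⟩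

/-- Dual formulation under the fail-state assumption (the paper's Proposition 3.3).
Let `S` be a measurable space with measurable singletons, `μ0` a probability measure,
`ρ ∈ [0,1]`, `H > 0`, and `V : S → ℝ` measurable with `0 ≤ V ≤ H` and `V(s_f) = 0` for
some `s_f`. Then `inf_{μ ∈ 𝒰^ρ(μ0)} ∫ V dμ = sup_{α ∈ [0,H]} (∫ [V]_α dμ0 − ρ·α)`, and
the supremum on the right-hand side is attained. -/
theorem tv_duality_fail_state {S : Type*} [MeasurableSpace S] [MeasurableSingletonClass S]
    (μ0 : Measure S) [IsProbabilityMeasure μ0]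
    (ρ : ℝ) (hρ : ρ ∈ Set.Icc (0 : ℝ) 1) (H : ℝ) (hH : 0 < H)
    (V : S → ℝ) (hV : Measurable V) (hV0 : ∀ s, 0 ≤ V s) (hVH : ∀ s, V s ≤ H)
    (s_f : S) (hsf : V s_f = 0) :
    ∃ α ∈ Set.Icc (0 : ℝ) H,
      ((∫ s, min (V s) α ∂μ0) - ρ * α =
        sInf {x : ℝ | ∃ μ ∈ tvUncertaintySet μ0 ρ, x = ∫ s, V s ∂μ}) ∧
      ∀ α' ∈ Set.Icc (0 : ℝ) H,
        (∫ s, min (V s) α' ∂μ0) - ρ * α' ≤ (∫ s, min (V s) α ∂μ0) - ρ * α :=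
  tv_duality_fail_state_general μ0 ρ hρ H V hV hV0 hVH s_f hsf
end

section
/- Let S be a measurable space in which all singleton sets are measurable, μ⁰ a probability measure on S, ρ ∈ [0,1], H > 0, and V : S → ℝ a measurable function with 0 ≤ V(s) ≤ H for all s which attains its infimum, i.e. there exists s* ∈ S with V(s*) = V_min where V_min = inf_s V(s); let V_max = sup_s V(s). Then inf_{μ ∈ 𝒰^ρ(μ⁰)} ∫ V dμ = sup_{α ∈ [V_min, V_max]} ( ∫ [V]_α dμ⁰ − ρ·(α − inf_s min(V(s), α)) ), and moreover the same value is obtained when α ranges over the larger interval [0,H]. -/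
open MeasureTheory

/-!
Weak duality: for `μ` within TV distance `ρ` of `μ0`, the layer-cake formula bounds
`∫ [V]_α dμ0 - ∫ [V]_α dμ` by `ρ` times the oscillation `α - inf [V]_α`, and `[V]_α ≤ V`.
Strong duality: take `α` an upper `ρ`-quantile of `V` under `μ0`, and move mass `ρ` from the
top of `V` (all of `{α < V}`, part of `{V = α}`) onto a minimiser of `V`. The resulting
measure lies in the TV ball and its integral of `V` equals the dual objective at `α`, so the
infimum and the supremum are both attained at this common value.
-/

open Set
open scoped ENNReal

theorem csInf_eq_csSup_of_forall_le_of_mem {α : Type*} [ConditionallyCompleteLattice α]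
    {D P : Set α} {x : α} (h : ∀ d ∈ D, ∀ p ∈ P, d ≤ p) (hxD : x ∈ D) (hxP : x ∈ P) :
    sInf P = sSup D :=
  (IsLeast.csInf_eq ⟨hxP, fun p hp => h x hxD p hp⟩).trans
    (IsGreatest.csSup_eq ⟨hxD, fun d hd => h d hd x hxP⟩).symm

section

variable {S : Type*} [MeasurableSpace S] {f : S → ℝ}

theorem integral_sub_integral_le_of_measureReal_sub_le {μ ν : Measure S}
    [IsFiniteMeasure μ] [IsFiniteMeasure ν] {ρ c : ℝ}
    (hTV : ∀ A, MeasurableSet A → ν.real A - μ.real A ≤ ρ) (hf : Measurable f)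
    (hf0 : ∀ s, 0 ≤ f s) (hfc : ∀ s, f s ≤ c) (hc : 0 ≤ c) :
    ∫ s, f s ∂ν - ∫ s, f s ∂μ ≤ ρ * c := by
  have hint : ∀ (m : Measure S) [IsFiniteMeasure m], Integrable f m := fun m _ =>
    Integrable.of_mem_Icc 0 c hf.aemeasurable (ae_of_all _ fun s => ⟨hf0 s, hfc s⟩)
  have hlayer : ∀ (m : Measure S) [IsFiniteMeasure m],
      ∫ s, f s ∂m = ∫ t in (0 : ℝ)..c, m.real {s | t ≤ f s} := fun m _ => by
    rw [(hint m).integral_eq_integral_Ioc_meas_le (ae_of_all _ hf0) (ae_of_all _ hfc),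
      intervalIntegral.integral_of_le hc]
  have hmeas_int : ∀ (m : Measure S) [IsFiniteMeasure m],
      IntervalIntegrable (fun t => m.real {s | t ≤ f s}) volume 0 c := fun m _ =>
    Antitone.intervalIntegrable fun t u htu =>
      measureReal_mono fun s hs => le_trans htu hs
  calc ∫ s, f s ∂ν - ∫ s, f s ∂μ
      = ∫ t in (0 : ℝ)..c, (ν.real {s | t ≤ f s} - μ.real {s | t ≤ f s}) := by
        rw [hlayer ν, hlayer μ, intervalIntegral.integral_sub (hmeas_int ν) (hmeas_int μ)]
    _ ≤ ∫ _ in (0 : ℝ)..c, ρ :=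
        intervalIntegral.integral_mono_on hc ((hmeas_int ν).sub (hmeas_int μ))
          intervalIntegrable_const fun t _ => hTV _ (measurableSet_le measurable_const hf)
    _ = ρ * c := by simp [mul_comm]

theorem integral_min_sub_le_integral_of_mem_tvUncertaintySet [Nonempty S]
    {μ0 μ : Measure S} [IsProbabilityMeasure μ0] {ρ : ℝ} (hμ : μ ∈ tvUncertaintySet μ0 ρ)
    (hf : Measurable f) (hfb : BddBelow (range f)) (hfi : Integrable f μ) (α : ℝ) :
    (∫ s, min (f s) α ∂μ0) - ρ * (α - ⨅ s, min (f s) α) ≤ ∫ s, f s ∂μ := by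
  have := hμ.1
  set m := ⨅ s, min (f s) α
  obtain ⟨b, hb⟩ := hfb
  have hm : ∀ s, m ≤ min (f s) α := ciInf_le
    ⟨min b α, by rintro _ ⟨s, rfl⟩; exact min_le_min_right _ (hb ⟨s, rfl⟩)⟩
  have hint : ∀ (ν : Measure S) [IsFiniteMeasure ν], Integrable (fun s => min (f s) α) ν :=
    fun ν _ => Integrable.of_mem_Icc m α (hf.min measurable_const).aemeasurable
      (ae_of_all _ fun s => ⟨hm s, min_le_right _ _⟩)
  have key := integral_sub_integral_le_of_measureReal_sub_le (μ := μ) (ν := μ0)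
    (fun A hA => (le_abs_self _).trans (abs_sub_comm (μ0.real A) _ ▸ hμ.2 A hA))
    ((hf.min measurable_const).sub_const m) (fun s => sub_nonneg.2 (hm s))
    (fun s => sub_le_sub_right (min_le_right _ _) m)
    (sub_nonneg.2 ((hm (Classical.arbitrary S)).trans (min_le_right _ _)))
  rw [integral_sub (hint μ0) (integrable_const m), integral_sub (hint μ) (integrable_const m),
    integral_const, integral_const] at key
  have hmin : ∫ s, min (f s) α ∂μ ≤ ∫ s, f s ∂μ :=
    integral_mono (hint μ) hfi fun s => min_le_left _ _
  simp only [probReal_univ, one_smul] at key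
  linarith

theorem exists_measure_lt_le_le_measure_le (μ : Measure S) [IsFiniteMeasure μ]
    (hf : Measurable f) {a b : ℝ} (hab : a ≤ b) (ha : ∀ s, a ≤ f s) (hb : ∀ s, f s ≤ b)
    {r : ℝ≥0∞} (hr : r ≤ μ univ) :
    ∃ α ∈ Icc a b, μ {s | α < f s} ≤ r ∧ r ≤ μ {s | α ≤ f s} := by
  set T := {α | a ≤ α ∧ μ {s | α < f s} ≤ r}
  have hbT : b ∈ T := ⟨hab, by simp [not_lt.2 (hb _)]⟩
  have haT : a ∈ lowerBounds T := fun _ h => h.1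
  refine ⟨sInf T, ⟨le_csInf ⟨b, hbT⟩ haT, csInf_le ⟨a, haT⟩ hbT⟩, ?_, ?_⟩
  · have hU : {s | sInf T < f s} = ⋃ β : Ioi (sInf T), {s | (β : ℝ) < f s} := by
      ext s
      simp only [mem_ofPred_eq, mem_iUnion, Subtype.exists, mem_Ioi, exists_prop]
      exact ⟨fun h => exists_between h, fun ⟨β, hβ, hβs⟩ => hβ.trans hβs⟩
    rw [hU, Antitone.measure_iUnion (s := fun β : Ioi (sInf T) => {s | (β : ℝ) < f s})
      fun β γ h s hs => lt_of_le_of_lt (show (β : ℝ) ≤ γ from h) hs]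
    refine iSup_le fun β => ?_
    obtain ⟨γ, hγT, hγβ⟩ := exists_lt_of_csInf_lt ⟨b, hbT⟩ β.2
    exact (measure_mono fun s hs => hγβ.trans hs).trans hγT.2
  · have hI : {s | sInf T ≤ f s} = ⋂ β : Iio (sInf T), {s | (β : ℝ) < f s} := by
      ext s
      simp only [mem_ofPred_eq, mem_iInter, Subtype.forall, mem_Iio]
      exact forall_lt_iff_le.symm
    rw [hI, Antitone.measure_iInter (s := fun β : Iio (sInf T) => {s | (β : ℝ) < f s})
      (fun β γ h s hs => lt_of_le_of_lt (show (β : ℝ) ≤ γ from h) hs)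
      (fun β => (hf measurableSet_Ioi).nullMeasurableSet)
      ⟨⟨sInf T - 1, by simp⟩, measure_ne_top _ _⟩]
    refine le_iInf fun β => ?_
    by_cases hβ : a ≤ β
    · exact le_of_lt (not_le.1 fun h => not_le.2 β.2 (csInf_le ⟨a, haT⟩ ⟨hβ, h⟩))
    · have : {s | (β : ℝ) < f s} = univ :=
        eq_univ_of_forall fun s => lt_of_lt_of_le (not_le.1 hβ) (ha s)
      rwa [this]

theorem exists_eq_add_of_measure_lt_le_le_measure_le (μ : Measure S) [IsFiniteMeasure μ]
    (hf : Measurable f) {α : ℝ} {r : ℝ≥0∞}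
    (h₁ : μ {s | α < f s} ≤ r) (h₂ : r ≤ μ {s | α ≤ f s}) :
    ∃ ν κ : Measure S, μ = ν + κ ∧ (∀ᵐ s ∂ν, f s ≤ α) ∧ (∀ᵐ s ∂κ, α ≤ f s) ∧
      κ univ = r := by
  set L := {s | f s < α}
  set E := {s | f s = α}
  set U := {s | α < f s}
  have hE : MeasurableSet E := hf (measurableSet_singleton α)
  have hU : MeasurableSet U := hf measurableSet_Ioi
  have hEU : Disjoint E U := disjoint_left.2 fun s (hs : f s = α) (ht : α < f s) => ht.ne' hs
  have hLc : Lᶜ = E ∪ U := by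
    ext s
    simp [L, E, U, le_iff_eq_or_lt, eq_comm]
  have hr : r - μ U ≤ μ E := by
    rw [tsub_le_iff_right, ← measure_union hEU hU]
    convert h₂ using 2
    ext s
    simp [E, U, le_iff_eq_or_lt, eq_comm]
  set c := (r - μ U) / μ E
  have hc : c ≤ 1 := ENNReal.div_le_of_le_mul (by rwa [one_mul])
  have hcE : c * μ E = r - μ U := by
    rcases eq_or_ne (μ E) 0 with h0 | h0
    · rw [h0, mul_zero, eq_comm, ← nonpos_iff_eq_zero, ← h0]
      exact hr
    · exact ENNReal.div_mul_cancel h0 (measure_ne_top _ _)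
  refine ⟨μ.restrict L + (1 - c) • μ.restrict E, μ.restrict U + c • μ.restrict E, ?_, ?_, ?_, ?_⟩
  · calc μ = μ.restrict L + (μ.restrict E + μ.restrict U) := by
          rw [← Measure.restrict_union hEU hU, ← hLc,
            Measure.restrict_add_restrict_compl (s := L) (hf measurableSet_Iio)]
      _ = μ.restrict L + ((1 - c) + c) • μ.restrict E + μ.restrict U := by
          rw [tsub_add_cancel_of_le hc, one_smul, add_assoc]
      _ = _ := by rw [add_smul]; abel
  · rw [ae_add_measure_iff]
    exact ⟨ae_restrict_of_forall_mem (hf measurableSet_Iio) fun s hs => le_of_lt hs,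
      Measure.ae_smul_measure (ae_restrict_of_forall_mem hE fun s hs => le_of_eq hs) _⟩
  · rw [ae_add_measure_iff]
    exact ⟨ae_restrict_of_forall_mem hU fun s hs => le_of_lt hs,
      Measure.ae_smul_measure (ae_restrict_of_forall_mem hE fun s hs => ge_of_eq hs) _⟩
  · simp only [Measure.add_apply, Measure.smul_apply, Measure.restrict_apply_univ, smul_eq_mul,
      hcE]
    exact add_tsub_cancel_of_le h₁

theorem add_smul_mem_tvUncertaintySet {μ0 ν κ π : Measure S} [IsProbabilityMeasure μ0]
    [IsProbabilityMeasure π] (h : μ0 = ν + κ) {ρ : ℝ} (hρ : 0 ≤ ρ)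
    (hκ : κ univ = ENNReal.ofReal ρ) :
    ν + ENNReal.ofReal ρ • π ∈ tvUncertaintySet μ0 ρ := by
  have hν : ∀ A, ν A ≠ ∞ := fun A =>
    ne_top_of_le_ne_top (measure_ne_top μ0 A) (h ▸ Measure.le_add_right le_rfl A)
  have hκA : ∀ A, κ A ≠ ∞ := fun A =>
    ne_top_of_le_ne_top (measure_ne_top μ0 A) (h ▸ Measure.le_add_left le_rfl A)
  refine ⟨⟨?_⟩, fun A _ => ?_⟩
  · rw [Measure.add_apply, Measure.smul_apply, measure_univ (μ := π), smul_eq_mul, mul_one, ← hκ,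
      ← Measure.add_apply, ← h, measure_univ]
  · have hκρ : (κ A).toReal ≤ ρ := by
      rw [← ENNReal.toReal_ofReal hρ, ← hκ]
      exact ENNReal.toReal_mono (hκA univ) (measure_mono (subset_univ A))
    have hπ : (π A).toReal ≤ 1 := measureReal_le_one
    rw [h, Measure.add_apply, Measure.add_apply, Measure.smul_apply, smul_eq_mul,
      ENNReal.toReal_add (hν A) (ENNReal.mul_ne_top ENNReal.ofReal_ne_top (measure_ne_top _ _)),
      ENNReal.toReal_add (hν A) (hκA A), ENNReal.toReal_mul, ENNReal.toReal_ofReal hρ,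
      abs_le]
    constructor <;>
      nlinarith [(π A).toReal_nonneg, (κ A).toReal_nonneg]

theorem integral_min_eq_of_eq_add {μ ν κ : Measure S} [IsFiniteMeasure μ] (h : μ = ν + κ)
    (hfi : Integrable f μ) {α : ℝ} (hν : ∀ᵐ s ∂ν, f s ≤ α) (hκ : ∀ᵐ s ∂κ, α ≤ f s) :
    ∫ s, min (f s) α ∂μ = ∫ s, f s ∂ν + κ.real univ * α := by
  have hg : Integrable (fun s => min (f s) α) μ := hfi.inf (integrable_const α)
  subst h
  rw [integral_add_measure (hg.mono_measure (Measure.le_add_right le_rfl))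
      (hg.mono_measure (Measure.le_add_left le_rfl)),
    integral_congr_ae (hν.mono fun s hs => min_eq_left hs),
    integral_congr_ae (hκ.mono fun s hs => min_eq_right hs), integral_const, smul_eq_mul]

theorem exists_mem_tvUncertaintySet_integral_eq (μ0 : Measure S) [IsProbabilityMeasure μ0]
    (hf : Measurable f) (hfi : Integrable f μ0) (s₀ : S) {ρ : ℝ} (hρ : 0 ≤ ρ) {α : ℝ}
    (h₁ : μ0 {s | α < f s} ≤ ENNReal.ofReal ρ) (h₂ : ENNReal.ofReal ρ ≤ μ0 {s | α ≤ f s}) :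
    ∃ μ ∈ tvUncertaintySet μ0 ρ,
      ∫ s, f s ∂μ = (∫ s, min (f s) α ∂μ0) - ρ * (α - f s₀) := by
  obtain ⟨ν, κ, h, hν, hκ, hκ_univ⟩ := exists_eq_add_of_measure_lt_le_le_measure_le μ0 hf h₁ h₂
  refine ⟨ν + ENNReal.ofReal ρ • Measure.dirac s₀, add_smul_mem_tvUncertaintySet h hρ hκ_univ, ?_⟩
  have hfν : Integrable f ν := hfi.mono_measure (h ▸ Measure.le_add_right le_rfl)
  have hfδ : Integrable f (Measure.dirac s₀) :=
    (integrable_const (f s₀)).congr (ae_eq_dirac' hf).symm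
  rw [integral_add_measure hfν (hfδ.smul_measure ENNReal.ofReal_ne_top), integral_smul_measure,
    integral_dirac' _ _ hf.stronglyMeasurable, integral_min_eq_of_eq_add h hfi hν hκ,
    measureReal_def, hκ_univ, ENNReal.toReal_ofReal hρ, smul_eq_mul]
  ring

end

theorem tv_strong_duality_general {S : Type*} [MeasurableSpace S]
    (μ0 : Measure S) [IsProbabilityMeasure μ0]
    (ρ : ℝ) (hρ : ρ ∈ Set.Icc (0 : ℝ) 1) (H : ℝ)
    (V : S → ℝ) (hV : Measurable V) (hV0 : ∀ s, 0 ≤ V s) (hVH : ∀ s, V s ≤ H)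
    (hattain : ∃ sstar : S, V sstar = ⨅ s, V s) :
    sInf {x : ℝ | ∃ μ ∈ tvUncertaintySet μ0 ρ, x = ∫ s, V s ∂μ} =
      sSup {x : ℝ | ∃ α ∈ Set.Icc (⨅ s, V s) (⨆ s, V s),
        x = (∫ s, min (V s) α ∂μ0) - ρ * (α - ⨅ s, min (V s) α)} ∧
    sInf {x : ℝ | ∃ μ ∈ tvUncertaintySet μ0 ρ, x = ∫ s, V s ∂μ} =
      sSup {x : ℝ | ∃ α ∈ Set.Icc (0 : ℝ) H,
        x = (∫ s, min (V s) α ∂μ0) - ρ * (α - ⨅ s, min (V s) α)} := by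
  obtain ⟨hρ0, hρ1⟩ := hρ
  obtain ⟨s₀, hs₀⟩ := hattain
  have : Nonempty S := ⟨s₀⟩
  have hVb : BddBelow (range V) := ⟨0, by rintro _ ⟨s, rfl⟩; exact hV0 s⟩
  have hVa : BddAbove (range V) := ⟨H, by rintro _ ⟨s, rfl⟩; exact hVH s⟩
  have hVi : ∀ (μ : Measure S) [IsFiniteMeasure μ], Integrable V μ := fun μ _ =>
    Integrable.of_mem_Icc 0 H hV.aemeasurable (ae_of_all _ fun s => ⟨hV0 s, hVH s⟩)
  have hs₀_le : ∀ s, V s₀ ≤ V s := fun s => hs₀ ▸ ciInf_le hVb s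
  obtain ⟨α, hα, h₁, h₂⟩ := exists_measure_lt_le_le_measure_le μ0 hV (r := ENNReal.ofReal ρ)
    (ciInf_le_ciSup hVb hVa) (ciInf_le hVb) (le_ciSup hVa) (by simpa using hρ1)
  have hs₀α : V s₀ ≤ α := hs₀ ▸ hα.1
  obtain ⟨μ, hμ, hμV⟩ := exists_mem_tvUncertaintySet_integral_eq μ0 hV (hVi μ0) s₀ hρ0 h₁ h₂
  have hinf : ⨅ s, min (V s) α = V s₀ := IsLeast.csInf_eq
    ⟨⟨s₀, min_eq_left hs₀α⟩, by rintro _ ⟨s, rfl⟩; exact le_min (hs₀_le s) hs₀α⟩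
  have hsandwich : ∀ I : Set ℝ, α ∈ I →
      sInf {x : ℝ | ∃ μ ∈ tvUncertaintySet μ0 ρ, x = ∫ s, V s ∂μ} =
        sSup {x : ℝ | ∃ β ∈ I, x = (∫ s, min (V s) β ∂μ0) - ρ * (β - ⨅ s, min (V s) β)} :=
    fun I hαI => csInf_eq_csSup_of_forall_le_of_mem
      (by
        rintro _ ⟨β, -, rfl⟩ _ ⟨μ', hμ', rfl⟩
        have := hμ'.1
        exact integral_min_sub_le_integral_of_mem_tvUncertaintySet hμ' hV hVb (hVi μ') β)
      ⟨α, hαI, rfl⟩ ⟨μ, hμ, by rw [hμV, hinf]⟩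
  exact ⟨hsandwich _ hα, hsandwich _ ⟨(hV0 s₀).trans hs₀α, hα.2.trans (ciSup_le hVH)⟩⟩

/-- Strong duality for total-variation uncertainty sets (Proposition F.1 of the paper).
Let `S` have measurable singletons, `μ0` be a probability measure, `ρ ∈ [0,1]`, `H > 0`,
and `V : S → ℝ` measurable with `0 ≤ V ≤ H` which attains its infimum. Then
`inf_{μ ∈ 𝒰^ρ(μ0)} ∫ V dμ
  = sup_{α ∈ [V_min, V_max]} (∫ [V]_α dμ0 − ρ·(α − inf_s min(V(s), α)))`,
and the same value is obtained when `α` ranges over the larger interval `[0,H]`. -/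
theorem tv_strong_duality {S : Type*} [MeasurableSpace S] [MeasurableSingletonClass S]
    (μ0 : Measure S) [IsProbabilityMeasure μ0]
    (ρ : ℝ) (hρ : ρ ∈ Set.Icc (0 : ℝ) 1) (H : ℝ) (hH : 0 < H)
    (V : S → ℝ) (hV : Measurable V) (hV0 : ∀ s, 0 ≤ V s) (hVH : ∀ s, V s ≤ H)
    (hattain : ∃ sstar : S, V sstar = ⨅ s, V s) :
    sInf {x : ℝ | ∃ μ ∈ tvUncertaintySet μ0 ρ, x = ∫ s, V s ∂μ} =
      sSup {x : ℝ | ∃ α ∈ Set.Icc (⨅ s, V s) (⨆ s, V s),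
        x = (∫ s, min (V s) α ∂μ0) - ρ * (α - ⨅ s, min (V s) α)} ∧
    sInf {x : ℝ | ∃ μ ∈ tvUncertaintySet μ0 ρ, x = ∫ s, V s ∂μ} =
      sSup {x : ℝ | ∃ α ∈ Set.Icc (0 : ℝ) H,
        x = (∫ s, min (V s) α ∂μ0) - ρ * (α - ⨅ s, min (V s) α)} :=
  tv_strong_duality_general μ0 ρ hρ H V hV hV0 hVH hattain
end

section
/- Let d, n ≥ 1 be integers, H ≥ 0, ρ ∈ [0,1], and λ a real with 0 < λ ≤ n. Let φ_1, …, φ_n ∈ ℝ^d with ‖φ_τ‖₂ ≤ 1 for each τ, let σ̄_1, …, σ̄_n be reals with σ̄_τ ≥ 1, and for each τ let v_τ : [0,H] → [0,H] be an arbitrary function. Define the weighted Gram matrix Σ = λ I_d + ∑_{τ=1}^n σ̄_τ^{-2} φ_τ φ_τ^⊤, for each α ∈ [0,H] the vector ẑ(α) = Σ^{-1} ∑_{τ=1}^n σ̄_τ^{-2} v_τ(α) φ_τ, and the vector ν ∈ ℝ^d by ν_i = sup_{α ∈ [0,H]} ( ẑ_i(α) − ρ·α ). Then ‖ν‖₂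 ≤ 2H√(d n / λ). -/
open Finset

/-- The weighted Gram matrix `Σ = λ I_d + ∑_{τ=1}^n σ̄_τ^{-2} φ_τ φ_τ^⊤`. -/
noncomputable def weightedGram (d n : ℕ) (lam : ℝ) (φ : Fin n → Fin d → ℝ)
    (σbar : Fin n → ℝ) : Matrix (Fin d) (Fin d) ℝ :=
  lam • (1 : Matrix (Fin d) (Fin d) ℝ) +
    ∑ τ, ((σbar τ) ^ 2)⁻¹ • Matrix.vecMulVec (φ τ) (φ τ)

/-- The variance-weighted ridge-regression solution
`ẑ(α) = Σ^{-1} ∑_{τ=1}^n σ̄_τ^{-2} v_τ(α) φ_τ`. -/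
noncomputable def ridgeSolution (d n : ℕ) (lam : ℝ) (φ : Fin n → Fin d → ℝ)
    (σbar : Fin n → ℝ) (v : Fin n → ℝ → ℝ) (α : ℝ) : Fin d → ℝ :=
  (weightedGram d n lam φ σbar)⁻¹.mulVec (∑ τ, (((σbar τ) ^ 2)⁻¹ * v τ α) • φ τ)

/-! Pairing the normal equation `Σ ẑ = ∑ w_τ v_τ φ_τ` (with `w_τ = σ̄_τ⁻²`) with `ẑ` gives
`λ‖ẑ‖² + ∑ w_τ t_τ² = ∑ w_τ v_τ t_τ` for `t_τ = ⟪φ_τ, ẑ⟫`. Since `v t - t² ≤ v² / 4` and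
`w_τ ≤ 1`, this yields `λ‖ẑ‖² ≤ nH²/4`, so every coordinate of `ẑ(α)` lies in `[-B, B]` with
`B = (H/2)√(n/λ)`. As `ρα ≥ 0`, each `ν_i` lies between `ẑ_i(0)` and `sup_α ẑ_i(α)`, hence in
`[-B, B]`, and `‖ν‖₂ ≤ √d B`. -/

open Matrix

section RidgeRegression

variable {m κ : Type*} [Fintype m] [DecidableEq m] [Fintype κ]

theorem dotProduct_ridgeGram_mulVec (lam : ℝ) (w : κ → ℝ) (φ : κ → m → ℝ) (x : m → ℝ) :
    x ⬝ᵥ ((lam • 1 + ∑ τ, w τ • vecMulVec (φ τ) (φ τ)) *ᵥ x)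
      = lam * (x ⬝ᵥ x) + ∑ τ, w τ * (φ τ ⬝ᵥ x) ^ 2 := by
  simp only [add_mulVec, smul_mulVec, one_mulVec, sum_mulVec, vecMulVec_mulVec,
    dotProduct_add, dotProduct_smul, dotProduct_sum, smul_eq_mul, op_smul_eq_smul]
  congr 1
  refine sum_congr rfl fun τ _ => ?_
  rw [dotProduct_comm x (φ τ)]
  ring

theorem posDef_ridgeGram {lam : ℝ} (hlam : 0 < lam) {w : κ → ℝ} (hw : ∀ τ, 0 ≤ w τ)
    (φ : κ → m → ℝ) : (lam • 1 + ∑ τ, w τ • vecMulVec (φ τ) (φ τ)).PosDef :=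
  (PosDef.one.smul hlam).add_posSemidef <| posSemidef_sum _ fun τ _ =>
    (posSemidef_vecMulVec_self_star (φ τ)).smul (hw τ)

theorem mul_dotProduct_self_le_of_ridgeGram_mulVec_eq {lam : ℝ} {w : κ → ℝ}
    (hw : ∀ τ, 0 ≤ w τ) (φ : κ → m → ℝ) (y : κ → ℝ) {z : m → ℝ}
    (hz : (lam • 1 + ∑ τ, w τ • vecMulVec (φ τ) (φ τ)) *ᵥ z = ∑ τ, (w τ * y τ) • φ τ) :
    lam * (z ⬝ᵥ z) ≤ ∑ τ, w τ * y τ ^ 2 / 4 := by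
  have hpair := dotProduct_ridgeGram_mulVec lam w φ z
  simp only [hz, dotProduct_sum, dotProduct_smul, smul_eq_mul] at hpair
  calc lam * (z ⬝ᵥ z)
      = ∑ τ, w τ * (y τ * (φ τ ⬝ᵥ z) - (φ τ ⬝ᵥ z) ^ 2) := by
        simp only [dotProduct_comm z (φ _)] at hpair
        simp only [mul_sub, sum_sub_distrib, ← mul_assoc]
        linarith
    _ ≤ ∑ τ, w τ * y τ ^ 2 / 4 := by
        refine sum_le_sum fun τ _ => ?_
        rw [mul_div_assoc]
        exact mul_le_mul_of_nonneg_left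
          (by nlinarith [sq_nonneg (φ τ ⬝ᵥ z - y τ / 2)]) (hw τ)

end RidgeRegression

theorem csSup_mem_Icc_of_mem {α : Type*} [ConditionallyCompleteLattice α] {S : Set α}
    {a b c : α} (ha : a ∈ S) (hca : c ≤ a) (hS : ∀ x ∈ S, x ≤ b) : sSup S ∈ Set.Icc c b :=
  ⟨hca.trans (le_csSup ⟨b, hS⟩ ha), csSup_le ⟨a, ha⟩ hS⟩

section RidgeSolution

variable {d n : ℕ} {lam : ℝ} (φ : Fin n → Fin d → ℝ) {σbar : Fin n → ℝ}

theorem weightedGram_mulVec_ridgeSolution (hlam : 0 < lam) (v : Fin n → ℝ → ℝ) (α : ℝ) :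
    weightedGram d n lam φ σbar *ᵥ ridgeSolution d n lam φ σbar v α
      = ∑ τ, ((σbar τ ^ 2)⁻¹ * v τ α) • φ τ := by
  have hdet : IsUnit (weightedGram d n lam φ σbar).det :=
    (isUnit_iff_isUnit_det _).mp (posDef_ridgeGram hlam (fun τ => by positivity) φ).isUnit
  rw [ridgeSolution, mulVec_mulVec, mul_nonsing_inv _ hdet, one_mulVec]

theorem ridgeSolution_apply_sq_le (hlam : 0 < lam) (hσ : ∀ τ, 1 ≤ σbar τ)
    {H : ℝ} {v : Fin n → ℝ → ℝ} {α : ℝ} (hv : ∀ τ, v τ α ∈ Set.Icc 0 H) (i : Fin d) :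
    ridgeSolution d n lam φ σbar v α i ^ 2 ≤ n * H ^ 2 / (4 * lam) := by
  set z := ridgeSolution d n lam φ σbar v α
  have hnorm := mul_dotProduct_self_le_of_ridgeGram_mulVec_eq
    (w := fun τ => (σbar τ ^ 2)⁻¹) (fun τ => by positivity) φ
    (fun τ => v τ α) (weightedGram_mulVec_ridgeSolution φ hlam v α)
  have hterm : ∀ τ, (σbar τ ^ 2)⁻¹ * v τ α ^ 2 ≤ H ^ 2 := fun τ =>
    (mul_le_of_le_one_left (sq_nonneg _) (inv_le_one_of_one_le₀ (one_le_pow₀ (hσ τ)))).trans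
      (pow_le_pow_left₀ (hv τ).1 (hv τ).2 2)
  have hsum : ∑ τ, (σbar τ ^ 2)⁻¹ * v τ α ^ 2 / 4 ≤ n * H ^ 2 / 4 :=
    (sum_le_sum fun τ _ => div_le_div_of_nonneg_right (hterm τ) zero_le_four).trans_eq
      (by simp [mul_div_assoc])
  have hcoord : z i ^ 2 ≤ z ⬝ᵥ z := by
    simpa only [dotProduct, sq] using
      single_le_sum (fun j _ => mul_self_nonneg (z j)) (mem_univ i)
  rw [le_div_iff₀ (by positivity)]
  nlinarith

end RidgeSolution

theorem dual_parameter_bound_general (d n : ℕ)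
    (H : ℝ) (hH : 0 ≤ H) (ρ : ℝ) (hρ : ρ ∈ Set.Icc (0 : ℝ) 1)
    (lam : ℝ) (hlam0 : 0 < lam)
    (φ : Fin n → Fin d → ℝ)
    (σbar : Fin n → ℝ) (hσ : ∀ τ, 1 ≤ σbar τ)
    (v : Fin n → ℝ → ℝ) (hv : ∀ τ, ∀ α ∈ Set.Icc (0 : ℝ) H, v τ α ∈ Set.Icc (0 : ℝ) H) :
    Real.sqrt (∑ i,
        (sSup {x : ℝ | ∃ α ∈ Set.Icc (0 : ℝ) H,
          x = ridgeSolution d n lam φ σbar v α i - ρ * α}) ^ 2)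
      ≤ 2 * H * Real.sqrt ((d : ℝ) * n / lam) := by
  have hC : 0 ≤ n * H ^ 2 / (4 * lam) := by positivity
  have hν : ∀ i, (sSup {x : ℝ | ∃ α ∈ Set.Icc (0 : ℝ) H,
      x = ridgeSolution d n lam φ σbar v α i - ρ * α}) ^ 2 ≤ n * H ^ 2 / (4 * lam) := by
    intro i
    have hz α (hα : α ∈ Set.Icc 0 H) := (Real.sq_le hC).mp
      (ridgeSolution_apply_sq_le φ hlam0 hσ (fun τ => hv τ α hα) i)
    have h0 : (0 : ℝ) ∈ Set.Icc 0 H := ⟨le_rfl, hH⟩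
    refine (Real.sq_le hC).mpr
      (csSup_mem_Icc_of_mem ⟨0, h0, rfl⟩ (by simpa using (hz 0 h0).1) ?_)
    rintro x ⟨α, hα, rfl⟩
    nlinarith [(hz α hα).2, mul_nonneg hρ.1 hα.1]
  refine (Real.sqrt_le_left (by positivity)).mpr
    ((sum_le_card_nsmul _ _ _ fun i _ => hν i).trans ?_)
  rw [card_univ, Fintype.card_fin, nsmul_eq_mul, mul_pow, mul_pow,
    Real.sq_sqrt (by positivity)]
  have : 0 ≤ H ^ 2 * (d * n / lam) := by positivity
  linarith [show (d : ℝ) * (n * H ^ 2 / (4 * lam)) = H ^ 2 * (d * n / lam) / 4 by ring]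

/-- Bound on the dual parameter produced by variance-weighted ridge regression (the
paper's Lemma D.1). With `Σ`, `ẑ(α)` as above and
`ν_i = sup_{α ∈ [0,H]} (ẑ_i(α) − ρ·α)`, if `‖φ_τ‖₂ ≤ 1`, `σ̄_τ ≥ 1`, `v_τ` maps `[0,H]`
into `[0,H]`, `ρ ∈ [0,1]` and `0 < λ ≤ n`, then `‖ν‖₂ ≤ 2H√(dn/λ)`. -/
theorem dual_parameter_bound (d n : ℕ) (hd : 1 ≤ d) (hn : 1 ≤ n)
    (H : ℝ) (hH : 0 ≤ H) (ρ : ℝ) (hρ : ρ ∈ Set.Icc (0 : ℝ) 1)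
    (lam : ℝ) (hlam0 : 0 < lam) (hlamn : lam ≤ n)
    (φ : Fin n → Fin d → ℝ) (hφ : ∀ τ, Real.sqrt (∑ i, φ τ i ^ 2) ≤ 1)
    (σbar : Fin n → ℝ) (hσ : ∀ τ, 1 ≤ σbar τ)
    (v : Fin n → ℝ → ℝ) (hv : ∀ τ, ∀ α ∈ Set.Icc (0 : ℝ) H, v τ α ∈ Set.Icc (0 : ℝ) H) :
    Real.sqrt (∑ i,
        (sSup {x : ℝ | ∃ α ∈ Set.Icc (0 : ℝ) H,
          x = ridgeSolution d n lam φ σbar v α i - ρ * α}) ^ 2)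
      ≤ 2 * H * Real.sqrt ((d : ℝ) * n / lam) :=
  dual_parameter_bound_general d n H hH ρ hρ lam hlam0 φ σbar hσ v hv
end

section
/- For every ε > 0, the optimistic value function class 𝒱 admits an ε-net with respect to the sup distance dist(V₁,V₂) = sup_{s∈S} |V₁(s) − V₂(s)| of cardinality at most (1 + 4L/ε)^{dℓ} · (1 + 8√d β² / (λ ε²))^{d²ℓ}; equivalently, the ε-covering entropy of 𝒱 satisfies log N_ε ≤ d·ℓ·log(1 + 4L/ε) + d²·ℓ·log(1 + 8√d β² / (λ ε²)). -/
/-!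
`V` depends on `Γ_j` only through its diagonal, whose entries are at most `√d/λ` in absolute
value, and on `w_j` through entries at most `L` in absolute value. Rounding these `dℓ + dℓ`
numbers to grids of mesh `ε` and `ε²/(2β²)` moves `V` by at most `ε`: the linear part moves by
`ε/2` because `φ(s,a)` is a probability vector, and the bonus part by `β · ε/(2β)` because
`|√x - √y| ≤ √|x - y|`. Counting grid points gives the bound (with room to spare in the
exponent `d²ℓ`).
-/

open Finset

/-- The value function determined by parameters `w_j, Γ_j`, `1 ≤ j ≤ ℓ`:
`V(s) = max_{a∈A} max_{1≤j≤ℓ} min{ r(s,a) + φ(s,a)^⊤ w_j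
          + β ∑_i φ_i(s,a) √((Γ_j)_{ii}), H }`. -/
noncomputable def optimisticValue {S A : Type*} [Fintype A] (d l : ℕ)
    (φ : S → A → Fin d → ℝ) (r : S → A → ℝ) (β H : ℝ)
    (w : Fin l → Fin d → ℝ) (Γ : Fin l → Matrix (Fin d) (Fin d) ℝ) (s : S) : ℝ :=
  ⨆ a : A, ⨆ j : Fin l,
    min (r s a + (∑ i, φ s a i * w j i) + β * ∑ i, φ s a i * Real.sqrt (Γ j i i)) H

/-- The optimistic value function class `𝒱`: all functions of the above form with
`‖w_j‖₂ ≤ L` and Frobenius norm `‖Γ_j‖_F ≤ √d/λ`. -/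
noncomputable def optimisticClass (S A : Type*) [Fintype A] (d l : ℕ)
    (φ : S → A → Fin d → ℝ) (r : S → A → ℝ) (β H L lam : ℝ) : Set (S → ℝ) :=
  {V | ∃ (w : Fin l → Fin d → ℝ) (Γ : Fin l → Matrix (Fin d) (Fin d) ℝ),
    (∀ j, Real.sqrt (∑ i, w j i ^ 2) ≤ L) ∧
    (∀ j, Real.sqrt (∑ i, ∑ k, Γ j i k ^ 2) ≤ Real.sqrt d / lam) ∧
    V = optimisticValue d l φ r β H w Γ}

theorem Real.abs_sqrt_sub_sqrt_le (a b : ℝ) : |√a - √b| ≤ √|a - b| := by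
  wlog hba : b ≤ a generalizing a b
  · rw [abs_sub_comm, abs_sub_comm a]
    exact this b a (le_of_not_ge hba)
  rw [abs_of_nonneg (sub_nonneg.2 (Real.sqrt_le_sqrt hba)), abs_of_nonneg (sub_nonneg.2 hba),
    sub_le_iff_le_add, Real.sqrt_le_iff]
  refine ⟨by positivity, ?_⟩
  have hb : b ≤ √b ^ 2 := by
    rcases le_total b 0 with hb | hb
    · exact hb.trans (sq_nonneg _)
    · exact (Real.sq_sqrt hb).ge
  nlinarith [Real.sq_sqrt (sub_nonneg.2 hba), Real.sqrt_nonneg (a - b), Real.sqrt_nonneg b]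

theorem abs_ciSup_sub_ciSup_le {ι : Type*} [Finite ι] {f g : ι → ℝ} {ε : ℝ} (hε : 0 ≤ ε)
    (h : ∀ i, |f i - g i| ≤ ε) : |(⨆ i, f i) - ⨆ i, g i| ≤ ε := by
  rcases isEmpty_or_nonempty ι with hι | hι
  · simpa [Real.iSup_of_isEmpty] using hε
  have hf : BddAbove (Set.range f) := (Set.finite_range f).bddAbove
  have hg : BddAbove (Set.range g) := (Set.finite_range g).bddAbove
  rw [abs_sub_le_iff, sub_le_iff_le_add, sub_le_iff_le_add]
  constructor <;> refine ciSup_le fun i => ?_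
  · linarith [(abs_le.1 (h i)).2, le_ciSup hg i]
  · linarith [(abs_le.1 (h i)).1, le_ciSup hf i]

theorem abs_sum_mul_sub_sum_mul_le {ι : Type*} [Fintype ι] {p u v : ι → ℝ} {δ : ℝ}
    (hp0 : ∀ i, 0 ≤ p i) (hp1 : ∑ i, p i = 1) (h : ∀ i, |u i - v i| ≤ δ) :
    |∑ i, p i * u i - ∑ i, p i * v i| ≤ δ :=
  calc |∑ i, p i * u i - ∑ i, p i * v i| = |∑ i, p i * (u i - v i)| := by
        simp only [mul_sub, sum_sub_distrib]
    _ ≤ ∑ i, p i * |u i - v i| := by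
        refine (abs_sum_le_sum_abs _ _).trans_eq (sum_congr rfl fun i _ => ?_)
        rw [abs_mul, abs_of_nonneg (hp0 i)]
    _ ≤ ∑ i, p i * δ := by gcongr with i; exacts [hp0 i, h i]
    _ = δ := by rw [← sum_mul, hp1, one_mul]

theorem exists_finset_abs_sub_le_half {R δ : ℝ} (hR : 0 ≤ R) (hδ : 0 < δ) :
    ∃ T : Finset ℝ, (T.card : ℝ) ≤ 1 + 2 * R / δ ∧
      ∀ x, |x| ≤ R → ∃ y ∈ T, |x - y| ≤ δ / 2 := by
  -- midpoints of the cells `[-R + kδ, -R + (k+1)δ]`, `k ≤ ⌊2R/δ⌋`, which cover `[-R, R]`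
  refine ⟨(range (⌊2 * R / δ⌋₊ + 1)).image fun k : ℕ => -R + (k + 1 / 2) * δ, ?_, ?_⟩
  · calc ((range (⌊2 * R / δ⌋₊ + 1)).image fun k : ℕ => -R + (k + 1 / 2) * δ).card
        ≤ ((⌊2 * R / δ⌋₊ + 1 : ℕ) : ℝ) := by exact_mod_cast (card_image_le).trans_eq (card_range _)
      _ ≤ 1 + 2 * R / δ := by
        push_cast
        linarith [Nat.floor_le (by positivity : 0 ≤ 2 * R / δ)]
  · intro x hx
    obtain ⟨hxl, hxr⟩ := abs_le.1 hx
    set k := ⌊(x + R) / δ⌋₊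
    have hk : k < ⌊2 * R / δ⌋₊ + 1 :=
      Nat.lt_succ_of_le (Nat.floor_le_floor (by gcongr; linarith))
    have hlow : k * δ ≤ x + R := (le_div_iff₀ hδ).1 (Nat.floor_le (div_nonneg (by linarith) hδ.le))
    have hhigh : x + R < (k + 1) * δ := (div_lt_iff₀ hδ).1 (Nat.lt_floor_add_one _)
    refine ⟨-R + (k + 1 / 2) * δ, mem_image.2 ⟨k, mem_range.2 hk, rfl⟩, abs_le.2 ⟨?_, ?_⟩⟩ <;>
      linarith

theorem exists_finset_pi_abs_sub_le_half (ι : Type*) [Fintype ι] {R δ : ℝ} (hR : 0 ≤ R)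
    (hδ : 0 < δ) :
    ∃ N : Finset (ι → ℝ), (N.card : ℝ) ≤ (1 + 2 * R / δ) ^ Fintype.card ι ∧
      ∀ x : ι → ℝ, (∀ i, |x i| ≤ R) → ∃ y ∈ N, ∀ i, |x i - y i| ≤ δ / 2 := by
  classical
  obtain ⟨T, hTcard, hT⟩ := exists_finset_abs_sub_le_half hR hδ
  refine ⟨Fintype.piFinset fun _ => T, ?_, fun x hx => ?_⟩
  · rw [Fintype.card_piFinset, prod_const, card_univ]
    push_cast
    gcongr
  · choose y hyT hy using fun i => hT (x i) (hx i)
    exact ⟨y, Fintype.mem_piFinset.2 hyT, hy⟩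

theorem abs_le_sqrt_sum_sq {ι : Type*} [Fintype ι] (x : ι → ℝ) (i : ι) :
    |x i| ≤ √(∑ j, x j ^ 2) :=
  Real.abs_le_sqrt (single_le_sum (fun j _ => sq_nonneg (x j)) (mem_univ i))

theorem Matrix.abs_apply_le_sqrt_sum_sq {m n : Type*} [Fintype m] [Fintype n]
    (M : Matrix m n ℝ) (i : m) (k : n) : |M i k| ≤ √(∑ i, ∑ k, M i k ^ 2) := by
  refine Real.abs_le_sqrt ((single_le_sum (fun k _ => sq_nonneg (M i k)) (mem_univ k)).trans ?_)
  exact single_le_sum (f := fun i => ∑ k, M i k ^ 2)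
    (fun i _ => sum_nonneg fun k _ => sq_nonneg (M i k)) (mem_univ i)

section OptimisticValue

variable {S A : Type*} [Fintype A] {d l : ℕ} {φ : S → A → Fin d → ℝ} {r : S → A → ℝ} {β : ℝ}

theorem abs_optimisticValue_sub_le (H : ℝ) (hφ0 : ∀ s a i, 0 ≤ φ s a i)
    (hφ1 : ∀ s a, ∑ i, φ s a i = 1) (hβ : 0 ≤ β) {w w' : Fin l → Fin d → ℝ}
    {Γ Γ' : Fin l → Matrix (Fin d) (Fin d) ℝ} {δ η : ℝ} (hδ : 0 ≤ δ) (hη : 0 ≤ η)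
    (hw : ∀ j i, |w j i - w' j i| ≤ δ) (hΓ : ∀ j i, |√(Γ j i i) - √(Γ' j i i)| ≤ η) (s : S) :
    |optimisticValue d l φ r β H w Γ s - optimisticValue d l φ r β H w' Γ' s| ≤ δ + β * η := by
  refine abs_ciSup_sub_ciSup_le (by positivity) fun a =>
    abs_ciSup_sub_ciSup_le (by positivity) fun j => ?_
  refine (abs_min_sub_min_le_max _ _ _ _).trans ?_
  rw [sub_self, abs_zero, max_le_iff]
  refine ⟨?_, by positivity⟩
  have hlin := abs_sum_mul_sub_sum_mul_le (hφ0 s a) (hφ1 s a) (hw j)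
  have hbonus := abs_sum_mul_sub_sum_mul_le (hφ0 s a) (hφ1 s a) (hΓ j)
  calc _ = |(∑ i, φ s a i * w j i - ∑ i, φ s a i * w' j i) +
        β * (∑ i, φ s a i * √(Γ j i i) - ∑ i, φ s a i * √(Γ' j i i))| := by ring_nf
    _ ≤ δ + β * η := by
        refine (abs_add_le _ _).trans ?_
        rw [abs_mul, abs_of_nonneg hβ]
        gcongr

theorem abs_optimisticValue_sub_le_of_abs_sub_le (H : ℝ) (hφ0 : ∀ s a i, 0 ≤ φ s a i)
    (hφ1 : ∀ s a, ∑ i, φ s a i = 1) (hβ : 0 < β) {ε : ℝ} (hε : 0 ≤ ε)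
    {w w' : Fin l → Fin d → ℝ} {Γ Γ' : Fin l → Matrix (Fin d) (Fin d) ℝ}
    (hw : ∀ j i, |w j i - w' j i| ≤ ε / 2) (hΓ : ∀ j i, |Γ j i i - Γ' j i i| ≤ (ε / (2 * β)) ^ 2)
    (s : S) :
    |optimisticValue d l φ r β H w Γ s - optimisticValue d l φ r β H w' Γ' s| ≤ ε := by
  have hbonus : ∀ j i, |√(Γ j i i) - √(Γ' j i i)| ≤ ε / (2 * β) := fun j i =>
    calc _ ≤ √((ε / (2 * β)) ^ 2) :=
          (Real.abs_sqrt_sub_sqrt_le _ _).trans (Real.sqrt_le_sqrt (hΓ j i))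
      _ = ε / (2 * β) := Real.sqrt_sq (by positivity)
  calc _ ≤ ε / 2 + β * (ε / (2 * β)) :=
        abs_optimisticValue_sub_le H hφ0 hφ1 hβ.le (by positivity) (by positivity) hw hbonus s
    _ = ε := by field_simp; ring

end OptimisticValue

theorem one_add_pow_mul_one_add_pow_le {x x' y y' : ℝ} {m m' n n' : ℕ} (hx : 0 ≤ x) (hy : 0 ≤ y)
    (hxx' : x ≤ x') (hyy' : y ≤ y') (hm : m ≤ m') (hn : n ≤ n') :
    (1 + x) ^ m * (1 + y) ^ n ≤ (1 + x') ^ m' * (1 + y') ^ n' := by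
  have h1x : 1 ≤ 1 + x' := by linarith
  have h1y : 1 ≤ 1 + y' := by linarith
  gcongr
  · exact (pow_le_pow_left₀ (by linarith) (by linarith) m).trans (pow_le_pow_right₀ h1x hm)
  · exact (pow_le_pow_left₀ (by linarith) (by linarith) n).trans (pow_le_pow_right₀ h1y hn)

theorem optimisticClass_covering_general {S A : Type*} [Fintype A]
    (d l : ℕ)
    (φ : S → A → Fin d → ℝ) (hφ0 : ∀ s a i, 0 ≤ φ s a i)
    (hφ1 : ∀ s a, ∑ i, φ s a i = 1) (r : S → A → ℝ)
    (β H L lam : ℝ) (hβ : 0 < β) (hL : 0 < L) (hlam : 0 < lam)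
    (ε : ℝ) (hε : 0 < ε) :
    ∃ C : Finset (S → ℝ),
      (∀ V ∈ optimisticClass S A d l φ r β H L lam,
        ∃ V' ∈ C, ∀ s, |V s - V' s| ≤ ε) ∧
      (C.card : ℝ) ≤ (1 + 4 * L / ε) ^ (d * l) *
        (1 + 8 * Real.sqrt d * β ^ 2 / (lam * ε ^ 2)) ^ (d ^ 2 * l) := by
  classical
  obtain ⟨Nw, hNw_card, hNw⟩ := exists_finset_pi_abs_sub_le_half (Fin l × Fin d) hL.le hε
  obtain ⟨NΓ, hNΓ_card, hNΓ⟩ := exists_finset_pi_abs_sub_le_half (Fin l × Fin d)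
    (R := √d / lam) (δ := 2 * (ε / (2 * β)) ^ 2) (by positivity) (by positivity)
  refine ⟨(Nw ×ˢ NΓ).image fun p => optimisticValue d l φ r β H (Function.curry p.1)
    fun j => Matrix.diagonal (Function.curry p.2 j), ?_, ?_⟩
  · rintro _ ⟨w, Γ, hw, hΓ, rfl⟩
    obtain ⟨y, hyN, hy⟩ := hNw (Function.uncurry w) fun ji =>
      (abs_le_sqrt_sum_sq (w ji.1) ji.2).trans (hw ji.1)
    obtain ⟨g, hgN, hg⟩ := hNΓ (fun ji => Γ ji.1 ji.2 ji.2) fun ji =>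
      ((Γ ji.1).abs_apply_le_sqrt_sum_sq _ _).trans (hΓ ji.1)
    refine ⟨_, mem_image_of_mem _ (show (y, g) ∈ Nw ×ˢ NΓ from mem_product.2 ⟨hyN, hgN⟩),
      abs_optimisticValue_sub_le_of_abs_sub_le H hφ0 hφ1 hβ hε.le (fun j i => hy (j, i))
        fun j i => ?_⟩
    simpa [Matrix.diagonal_apply_eq] using hg (j, i)
  · rw [Fintype.card_prod, Fintype.card_fin, Fintype.card_fin] at hNw_card hNΓ_card
    calc ((Nw ×ˢ NΓ).image _).card ≤ (Nw.card : ℝ) * NΓ.card := by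
          exact_mod_cast card_image_le.trans_eq (card_product _ _)
      _ ≤ _ := mul_le_mul hNw_card hNΓ_card (by positivity) (by positivity)
      _ ≤ _ := by
          refine one_add_pow_mul_one_add_pow_le (by positivity) (by positivity)
            (by gcongr; norm_num) ?_ (Nat.mul_comm l d).le
            ((Nat.mul_comm l d).trans_le (Nat.mul_le_mul_right l (Nat.le_self_pow two_ne_zero d)))
          rw [show 2 * (√d / lam) / (2 * (ε / (2 * β)) ^ 2) = 4 * √d * β ^ 2 / (lam * ε ^ 2) by
            field_simp; ring]
          gcongr
          norm_num

/-- Covering number of the optimistic value function class (the paper's Lemma C.1):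
for every `ε > 0` the class `𝒱` admits an `ε`-net in the sup distance of cardinality at
most `(1 + 4L/ε)^{dℓ} · (1 + 8√d β² / (λ ε²))^{d²ℓ}`. -/
theorem optimisticClass_covering {S A : Type*} [Nonempty S] [Fintype A] [Nonempty A]
    (d l : ℕ) (hd : 1 ≤ d) (hl : 1 ≤ l)
    (φ : S → A → Fin d → ℝ) (hφ0 : ∀ s a i, 0 ≤ φ s a i)
    (hφ1 : ∀ s a, ∑ i, φ s a i = 1) (r : S → A → ℝ)
    (β H L lam : ℝ) (hβ : 0 < β) (hH : 0 < H) (hL : 0 < L) (hlam : 0 < lam)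
    (ε : ℝ) (hε : 0 < ε) :
    ∃ C : Finset (S → ℝ),
      (∀ V ∈ optimisticClass S A d l φ r β H L lam,
        ∃ V' ∈ C, ∀ s, |V s - V' s| ≤ ε) ∧
      (C.card : ℝ) ≤ (1 + 4 * L / ε) ^ (d * l) *
        (1 + 8 * Real.sqrt d * β ^ 2 / (lam * ε ^ 2)) ^ (d ^ 2 * l) :=
  optimisticClass_covering_general d l φ hφ0 hφ1 r β H L lam hβ hL hlam ε hε
end

section
/- Let 𝒱̃ = { s ↦ min(V(s), α) : V ∈ 𝒱, α ∈ [0,H] } be the truncated optimistic value function class. Then for every ε with 0 < ε ≤ H, the class 𝒱̃ admits an ε-net with respect to the sup distance dist(V₁,V₂) = sup_{s∈S} |V₁(s) − V₂(s)| of cardinality at most (1 + 8L/ε)^{dℓ} · (1 + 32√d β² / (λ ε²))^{d²ℓ} · (6H/ε). -/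
open Finset

/-- The truncated optimistic value function class
`𝒱̃ = { s ↦ min(V(s), α) : V ∈ 𝒱, α ∈ [0,H] }`. -/
noncomputable def truncatedOptimisticClass (S A : Type*) [Fintype A] (d l : ℕ)
    (φ : S → A → Fin d → ℝ) (r : S → A → ℝ) (β H L lam : ℝ) : Set (S → ℝ) :=
  {W | ∃ V ∈ optimisticClass S A d l φ r β H L lam, ∃ α ∈ Set.Icc (0 : ℝ) H,
    W = fun s => min (V s) α}

lemma sqrt_add_le' (u v : ℝ) (hu : 0 ≤ u) (hv : 0 ≤ v) :
    Real.sqrt (u + v) ≤ Real.sqrt u + Real.sqrt v := by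
  have h : u + v ≤ (Real.sqrt u + Real.sqrt v) ^ 2 := by
    have h1 := Real.sq_sqrt hu
    have h2 := Real.sq_sqrt hv
    nlinarith [Real.sqrt_nonneg u, Real.sqrt_nonneg v]
  calc Real.sqrt (u + v) ≤ Real.sqrt ((Real.sqrt u + Real.sqrt v) ^ 2) := Real.sqrt_le_sqrt h
    _ = _ := Real.sqrt_sq (by positivity)

lemma sqrt_sub_sqrt_le (a b : ℝ) : Real.sqrt a ≤ Real.sqrt b + Real.sqrt |a - b| := by
  rcases le_or_gt b 0 with hb | hb
  · have h1 : a ≤ |a - b| := by cases abs_cases (a - b) <;> linarith [le_abs_self (a - b)]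
    calc Real.sqrt a ≤ Real.sqrt |a - b| := Real.sqrt_le_sqrt h1
      _ ≤ _ := by linarith [Real.sqrt_nonneg b]
  · have h1 : a ≤ b + |a - b| := by cases abs_cases (a - b) <;> linarith
    calc Real.sqrt a ≤ Real.sqrt (b + |a - b|) := Real.sqrt_le_sqrt h1
      _ ≤ _ := sqrt_add_le' _ _ hb.le (abs_nonneg _)

lemma abs_sqrt_sub_sqrt (x y : ℝ) : |Real.sqrt x - Real.sqrt y| ≤ Real.sqrt |x - y| := by
  rw [abs_sub_le_iff]
  constructor
  · linarith [sqrt_sub_sqrt_le x y]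
  · have := sqrt_sub_sqrt_le y x
    rw [abs_sub_comm] at this
    linarith

lemma abs_ciSup_sub {ι : Type*} [Fintype ι] [Nonempty ι] (f g : ι → ℝ) (c : ℝ)
    (h : ∀ i, |f i - g i| ≤ c) : |(⨆ i, f i) - ⨆ i, g i| ≤ c := by
  have hbf := Set.Finite.bddAbove (Set.finite_range f)
  have hbg := Set.Finite.bddAbove (Set.finite_range g)
  rw [abs_sub_le_iff]
  constructor
  · rw [sub_le_iff_le_add]
    exact ciSup_le fun i => by
      have h1 := (abs_le.1 (h i)).2
      have h2 := le_ciSup hbg i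
      linarith
  · rw [sub_le_iff_le_add]
    exact ciSup_le fun i => by
      have h1 := (abs_le.1 (h i)).1
      have h2 := le_ciSup hbf i
      linarith

lemma netIcc (R δ : ℝ) (hR : 0 ≤ R) (hδ : 0 < δ) :
    ∃ T : Finset ℝ, (∀ x : ℝ, |x| ≤ R → ∃ y ∈ T, |x - y| ≤ δ) ∧ (T.card : ℝ) ≤ R / δ + 2 := by
  refine ⟨(Finset.range (⌊R / δ + 1/2⌋₊ + 1)).image (fun k : ℕ => -R + 2 * δ * k), ?_, ?_⟩
  · intro x hx
    obtain ⟨hx1, hx2⟩ := abs_le.1 hx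
    set t := (x + R) / (2 * δ) with ht
    have ht0 : 0 ≤ t := div_nonneg (by linarith) (by linarith)
    have htR : t ≤ R / δ := by
      rw [ht, div_le_div_iff₀ (by linarith) hδ]
      ring_nf
      nlinarith
    set k := ⌊t + 1/2⌋₊ with hk
    refine ⟨-R + 2 * δ * k, Finset.mem_image_of_mem _ ?_, ?_⟩
    · rw [Finset.mem_range, Nat.lt_succ_iff]
      exact Nat.floor_le_floor (by linarith)
    · have h1 : (k : ℝ) ≤ t + 1/2 := Nat.floor_le (by linarith)
      have h2 : t + 1/2 < k + 1 := Nat.lt_floor_add_one _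
      have hxy : x - (-R + 2 * δ * k) = 2 * δ * (t - k) := by
        rw [ht]; field_simp; ring
      rw [hxy, abs_mul, abs_of_pos (by linarith : (0:ℝ) < 2 * δ)]
      have : |t - (k : ℝ)| ≤ 1/2 := abs_le.2 ⟨by linarith, by linarith⟩
      nlinarith
  · have h1 : ((Finset.range (⌊R / δ + 1/2⌋₊ + 1)).image
        (fun k : ℕ => -R + 2 * δ * k)).card ≤ ⌊R / δ + 1/2⌋₊ + 1 :=
      Finset.card_image_le.trans_eq (Finset.card_range _)
    have h2 : ((⌊R / δ + 1/2⌋₊ : ℕ) : ℝ) ≤ R / δ + 1/2 :=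
      Nat.floor_le (by positivity)
    calc (((Finset.range (⌊R / δ + 1/2⌋₊ + 1)).image
        (fun k : ℕ => -R + 2 * δ * k)).card : ℝ)
        ≤ ((⌊R / δ + 1/2⌋₊ + 1 : ℕ) : ℝ) := Nat.cast_le.2 h1
      _ ≤ R / δ + 2 := by push_cast; linarith

lemma netBudget (R δ B : ℝ) (hR : 0 ≤ R) (hδ : 0 < δ) (h1 : 1 ≤ B)
    (h2 : R ≤ δ ∨ R / δ + 2 ≤ B) :
    ∃ T : Finset ℝ, (∀ x : ℝ, |x| ≤ R → ∃ y ∈ T, |x - y| ≤ δ) ∧ (T.card : ℝ) ≤ B := by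
  rcases h2 with h | h
  · exact ⟨{0}, fun x hx => ⟨0, Finset.mem_singleton_self 0, by simpa using hx.trans h⟩,
      by simpa using h1⟩
  · obtain ⟨T, hc, hcard⟩ := netIcc R δ hR hδ
    exact ⟨T, hc, hcard.trans h⟩

/-- Covering bound for the truncated optimistic value function class (proved inside the
paper's Lemma B.5): for every `0 < ε ≤ H`, `𝒱̃` admits an `ε`-net in the sup distance of
cardinality at most `(1 + 8L/ε)^{dℓ} · (1 + 32√d β² / (λ ε²))^{d²ℓ} · (6H/ε)`. -/
theorem truncatedOptimisticClass_covering {S A : Type*} [Nonempty S] [Fintype A]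
    [Nonempty A] (d l : ℕ) (hd : 1 ≤ d) (hl : 1 ≤ l)
    (φ : S → A → Fin d → ℝ) (hφ0 : ∀ s a i, 0 ≤ φ s a i)
    (hφ1 : ∀ s a, ∑ i, φ s a i = 1) (r : S → A → ℝ)
    (β H L lam : ℝ) (hβ : 0 < β) (hH : 0 < H) (hL : 0 < L) (hlam : 0 < lam)
    (ε : ℝ) (hε0 : 0 < ε) (hεH : ε ≤ H) :
    ∃ C : Finset (S → ℝ),
      (∀ W ∈ truncatedOptimisticClass S A d l φ r β H L lam,
        ∃ W' ∈ C, ∀ s, |W s - W' s| ≤ ε) ∧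
      (C.card : ℝ) ≤ (1 + 8 * L / ε) ^ (d * l) *
        (1 + 32 * Real.sqrt d * β ^ 2 / (lam * ε ^ 2)) ^ (d ^ 2 * l) * (6 * H / ε) := by
  classical
  have hld : Nonempty (Fin l) := ⟨⟨0, hl⟩⟩
  have hd1 : (1:ℝ) ≤ (d:ℝ) := by exact_mod_cast hd
  have hsd : (1:ℝ) ≤ Real.sqrt d := by
    rw [show (1:ℝ) = Real.sqrt 1 from (Real.sqrt_one).symm]
    exact Real.sqrt_le_sqrt hd1
  have hsd0 : 0 < Real.sqrt d := by linarith
  -- the nets on parameters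
  obtain ⟨Tw, hTwc, hTwcard⟩ := netBudget L (ε/3) (1 + 8 * L / ε) hL.le (by positivity)
    (le_add_of_nonneg_right (by positivity))
    (by
      rcases le_or_gt L (ε/3) with h | h
      · exact Or.inl h
      · refine Or.inr ?_
        have e1 : L / (ε/3) = 3 * L / ε := by field_simp
        have e2 : 1 ≤ 5 * L / ε := by rw [le_div_iff₀ hε0]; linarith
        have e3 : 3 * L / ε + 5 * L / ε = 8 * L / ε := by ring
        linarith)
  obtain ⟨TG, hTGc, hTGcard⟩ := netBudget (Real.sqrt d / lam) ((ε / (3*β))^2)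
      (1 + 32 * Real.sqrt d * β ^ 2 / (lam * ε ^ 2)) (by positivity) (by positivity)
    (le_add_of_nonneg_right (by positivity))
    (by
      rcases le_or_gt (Real.sqrt d / lam) ((ε / (3*β))^2) with h | h
      · exact Or.inl h
      · refine Or.inr ?_
        have e0 : (ε / (3*β))^2 = ε^2 / (9*β^2) := by
          rw [div_pow]; ring_nf
        rw [e0, div_lt_div_iff₀ (by positivity) hlam] at h
        have hcm : lam * ε^2 < 9 * (Real.sqrt d * β^2) := by nlinarith
        have e1 : (Real.sqrt d / lam) / ((ε / (3*β))^2)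
            = 9 * (Real.sqrt d * β^2) / (lam * ε^2) := by field_simp; ring
        have e2 : 1 ≤ 23 * (Real.sqrt d * β^2) / (lam * ε^2) := by
          rw [le_div_iff₀ (by positivity)]; nlinarith
        have e3 : 9 * (Real.sqrt d * β^2) / (lam * ε^2)
            + 23 * (Real.sqrt d * β^2) / (lam * ε^2)
            = 32 * Real.sqrt d * β ^ 2 / (lam * ε ^ 2) := by ring
        linarith)
  obtain ⟨Ta, hTac, hTacard⟩ := netBudget H (ε/3) (6 * H / ε) hH.le (by positivity)
    (by have : 1 ≤ H / ε := (one_le_div hε0).2 hεH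
        have : 6 * H / ε = 6 * (H / ε) := by ring
        linarith)
    (by
      refine Or.inr ?_
      have e1 : H / (ε/3) = 3 * (H / ε) := by field_simp
      have e2 : 1 ≤ H / ε := (one_le_div hε0).2 hεH
      have e3 : 6 * H / ε = 6 * (H / ε) := by ring
      linarith)
  set Nw : Finset (Fin l → Fin d → ℝ) :=
    Fintype.piFinset fun _ => Fintype.piFinset fun _ => Tw with hNw
  set NG : Finset (Fin l → Fin d → Fin d → ℝ) :=
    Fintype.piFinset fun _ => Fintype.piFinset fun _ => Fintype.piFinset fun _ => TG with hNG
  set F : (Fin l → Fin d → ℝ) × (Fin l → Fin d → Fin d → ℝ) × ℝ → (S → ℝ) :=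
    fun p s => min (optimisticValue d l φ r β H p.1 (fun j => Matrix.of (p.2.1 j)) s) p.2.2
    with hF
  refine ⟨(Nw ×ˢ NG ×ˢ Ta).image F, ?_, ?_⟩
  · rintro W ⟨V, ⟨w, Γ, hwL, hΓF, rfl⟩, α, hα, rfl⟩
    have hwb : ∀ j i, |w j i| ≤ L := by
      intro j i
      have h1 : (w j i)^2 ≤ ∑ i', w j i' ^ 2 :=
        Finset.single_le_sum (f := fun i' => w j i' ^ 2)
          (fun i' _ => sq_nonneg _) (Finset.mem_univ i)
      calc |w j i| = Real.sqrt ((w j i)^2) := (Real.sqrt_sq_eq_abs _).symm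
        _ ≤ Real.sqrt (∑ i', w j i' ^ 2) := Real.sqrt_le_sqrt h1
        _ ≤ L := hwL j
    have hΓb : ∀ j i k, |Γ j i k| ≤ Real.sqrt d / lam := by
      intro j i k
      have h1 : (Γ j i k)^2 ≤ ∑ k', Γ j i k' ^ 2 :=
        Finset.single_le_sum (f := fun k' => Γ j i k' ^ 2)
          (fun k' _ => sq_nonneg _) (Finset.mem_univ k)
      have h2 : ∑ k', Γ j i k' ^ 2 ≤ ∑ i', ∑ k', Γ j i' k' ^ 2 :=
        Finset.single_le_sum (f := fun i' => ∑ k', Γ j i' k' ^ 2)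
          (fun i' _ => Finset.sum_nonneg fun _ _ => sq_nonneg _) (Finset.mem_univ i)
      calc |Γ j i k| = Real.sqrt ((Γ j i k)^2) := (Real.sqrt_sq_eq_abs _).symm
        _ ≤ Real.sqrt (∑ i', ∑ k', Γ j i' k' ^ 2) := Real.sqrt_le_sqrt (by linarith)
        _ ≤ Real.sqrt d / lam := hΓF j
    choose w' hw'mem hw'close using fun (j : Fin l) (i : Fin d) => hTwc (w j i) (hwb j i)
    choose Γ' hΓ'mem hΓ'close using
      fun (j : Fin l) (i k : Fin d) => hTGc (Γ j i k) (hΓb j i k)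
    obtain ⟨α', hα'mem, hα'close⟩ := hTac α (abs_le.2 ⟨by linarith [hα.1], hα.2⟩)
    refine ⟨F (w', Γ', α'), Finset.mem_image_of_mem F ?_, ?_⟩
    · rw [Finset.mem_product]
      refine ⟨Fintype.mem_piFinset.2 fun j => Fintype.mem_piFinset.2 fun i => hw'mem j i, ?_⟩
      rw [Finset.mem_product]
      exact ⟨Fintype.mem_piFinset.2 fun j => Fintype.mem_piFinset.2 fun i =>
        Fintype.mem_piFinset.2 fun k => hΓ'mem j i k, hα'mem⟩
    · intro s
      have hsqδ : Real.sqrt ((ε / (3*β))^2) = ε / (3*β) := Real.sqrt_sq (by positivity)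
      have sumb : ∀ (a : A) (u : Fin d → ℝ) (c : ℝ), (∀ i, |u i| ≤ c) →
          |∑ i, φ s a i * u i| ≤ c := by
        intro a u c hu
        have hc : 0 ≤ c := le_trans (abs_nonneg _) (hu ⟨0, hd⟩)
        calc |∑ i, φ s a i * u i| ≤ ∑ i, |φ s a i * u i| := Finset.abs_sum_le_sum_abs _ _
          _ ≤ ∑ i, φ s a i * c := Finset.sum_le_sum fun i _ => by
              rw [abs_mul, abs_of_nonneg (hφ0 s a i)]
              exact mul_le_mul_of_nonneg_left (hu i) (hφ0 s a i)
          _ = c := by rw [← Finset.sum_mul, hφ1 s a, one_mul]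
      have key : |optimisticValue d l φ r β H w Γ s
          - optimisticValue d l φ r β H w' (fun j => Matrix.of (Γ' j)) s| ≤ 2*ε/3 := by
        unfold optimisticValue
        apply abs_ciSup_sub
        intro a
        apply abs_ciSup_sub
        intro j
        refine le_trans (abs_min_sub_min_le_max _ _ _ _) (max_le ?_ (by simp; positivity))
        have hX : (r s a + ∑ i, φ s a i * w j i + β * ∑ i, φ s a i * Real.sqrt (Γ j i i))
            - (r s a + ∑ i, φ s a i * w' j i
              + β * ∑ i, φ s a i * Real.sqrt (Matrix.of (Γ' j) i i))
            = (∑ i, φ s a i * (w j i - w' j i))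
              + β * (∑ i, φ s a i * (Real.sqrt (Γ j i i) - Real.sqrt (Γ' j i i))) := by
          simp only [Matrix.of_apply, mul_sub, Finset.sum_sub_distrib, Finset.mul_sum]
          ring
        rw [hX]
        have b1 : |∑ i, φ s a i * (w j i - w' j i)| ≤ ε/3 :=
          sumb a _ _ fun i => hw'close j i
        have b2 : |∑ i, φ s a i * (Real.sqrt (Γ j i i) - Real.sqrt (Γ' j i i))| ≤ ε/(3*β) :=
          sumb a _ _ fun i =>
            le_trans (abs_sqrt_sub_sqrt _ _)
              (by rw [← hsqδ]; exact Real.sqrt_le_sqrt (hΓ'close j i i))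
        have hbe : β * (ε / (3*β)) = ε/3 := by field_simp
        calc |(∑ i, φ s a i * (w j i - w' j i))
              + β * ∑ i, φ s a i * (Real.sqrt (Γ j i i) - Real.sqrt (Γ' j i i))|
            ≤ |∑ i, φ s a i * (w j i - w' j i)|
              + |β * ∑ i, φ s a i * (Real.sqrt (Γ j i i) - Real.sqrt (Γ' j i i))| :=
              abs_add_le _ _
          _ ≤ ε/3 + β * (ε/(3*β)) := by
              rw [abs_mul, abs_of_pos hβ]
              exact add_le_add b1 (mul_le_mul_of_nonneg_left b2 hβ.le)
          _ = 2*ε/3 := by rw [hbe]; ring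
      calc |min (optimisticValue d l φ r β H w Γ s) α - F (w', Γ', α') s|
          ≤ max |optimisticValue d l φ r β H w Γ s
              - optimisticValue d l φ r β H w' (fun j => Matrix.of (Γ' j)) s| |α - α'| :=
            abs_min_sub_min_le_max _ _ _ _
        _ ≤ ε := max_le (by linarith) (by linarith)
  · have cNw : (Nw.card : ℝ) = (Tw.card : ℝ) ^ (d * l) := by
      rw [hNw]
      push_cast [Fintype.card_piFinset, Finset.prod_const, Finset.card_univ,
        Fintype.card_fin]
      rw [← pow_mul, mul_comm]
    have cNG : (NG.card : ℝ) = (TG.card : ℝ) ^ (d ^ 2 * l) := by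
      rw [hNG]
      push_cast [Fintype.card_piFinset, Finset.prod_const, Finset.card_univ,
        Fintype.card_fin]
      rw [← pow_mul, ← pow_mul]
      congr 1
      ring
    calc (((Nw ×ˢ NG ×ˢ Ta).image F).card : ℝ)
        ≤ ((Nw ×ˢ NG ×ˢ Ta).card : ℝ) := Nat.cast_le.2 Finset.card_image_le
      _ = (Nw.card : ℝ) * ((NG.card : ℝ) * (Ta.card : ℝ)) := by
          push_cast [Finset.card_product]; ring
      _ ≤ (1 + 8 * L / ε) ^ (d * l) *
          ((1 + 32 * Real.sqrt d * β ^ 2 / (lam * ε ^ 2)) ^ (d ^ 2 * l) * (6 * H / ε)) := by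
          rw [cNw, cNG]
          have g1 : (Tw.card : ℝ) ^ (d * l) ≤ (1 + 8 * L / ε) ^ (d * l) :=
            pow_le_pow_left₀ (Nat.cast_nonneg _) hTwcard _
          have g2 : (TG.card : ℝ) ^ (d ^ 2 * l)
              ≤ (1 + 32 * Real.sqrt d * β ^ 2 / (lam * ε ^ 2)) ^ (d ^ 2 * l) :=
            pow_le_pow_left₀ (Nat.cast_nonneg _) hTGcard _
          have h6 : (0:ℝ) ≤ 6 * H / ε := by positivity
          exact mul_le_mul g1 (mul_le_mul g2 hTacard (Nat.cast_nonneg _)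
              (by positivity)) (by positivity) (by positivity)
      _ = _ := by ring
end

section
/- With S_k and T_k as defined and S_H = T_H = 0, the telescoping identity T_1 − S_1 = ∑_{h=1}^{H−1} (p − o_h) · ( ∑_{i=1}^{H−h} q^i − q·T_{h+1} ) · q^{h−1} · ∏_{j=1}^{h−1} (1 − o_j − δ) holds. -/
open Finset

/-- The value `S_k` of the policy with expected actions `o` in the hard-instance
construction of the paper's lower-bound proof (Lemma E.1). `S_H = 0` since the sum
is empty. -/
noncomputable def lowerBoundS (H : ℕ) (q δ : ℝ) (o : ℕ → ℝ) (k : ℕ) : ℝ :=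
  ∑ h ∈ Finset.Icc k (H - 1),
    (∑ i ∈ Finset.Icc (h - k + 1) (H - k), q ^ i) *
      (∏ j ∈ Finset.Icc k (h - 1), (1 - o j - δ)) * (o h + δ)

/-- The optimal value `T_k` in the hard-instance construction: `T_k` is `S_k` with every
`o_j` replaced by the constant `p`. `T_H = 0` since the sum is empty. -/
noncomputable def lowerBoundT (H : ℕ) (q δ p : ℝ) (k : ℕ) : ℝ :=
  ∑ h ∈ Finset.Icc k (H - 1),
    (∑ i ∈ Finset.Icc (h - k + 1) (H - k), q ^ i) *
      (1 - p - δ) ^ (h - k) * (p + δ)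

/-!
Splitting off the term `h = k` gives the one-step recursion
`S_k = (∑_{i=1}^{H-k} q^i)(o_k + δ) + q(1 - o_k - δ) S_{k+1}`, and the same for `T_k` with
`o_k = p`. Hence `D_k = T_k - S_k` satisfies the linear recursion
`D_k = (p - o_k)(∑_{i=1}^{H-k} q^i - q T_{k+1}) + q(1 - o_k - δ) D_{k+1}`, and unrolling it from
`k = 1` down to `D_H = 0` yields the identity.
-/

theorem eq_sum_prod_add_prod_mul_of_eq_add_mul {R : Type*} [CommSemiring R] {D b c : ℕ → R}
    {m n : ℕ} (hmn : m ≤ n) (hD : ∀ k, m ≤ k → k < n → D k = b k + c k * D (k + 1)) :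
    D m = ∑ h ∈ Ico m n, b h * ∏ j ∈ Ico m h, c j + (∏ j ∈ Ico m n, c j) * D n := by
  induction n, hmn using Nat.le_induction with
  | base => simp
  | succ n hmn ih =>
    rw [ih fun k hmk hkn ↦ hD k hmk (by omega), hD n hmn (by omega),
      sum_Ico_succ_top hmn, prod_Ico_succ_top hmn]
    ring

theorem sum_Icc_add_one_pow {R : Type*} [Semiring R] (q : R) (a b : ℕ) :
    ∑ i ∈ Icc (a + 1) (b + 1), q ^ i = q * ∑ i ∈ Icc a b, q ^ i := by
  rw [← map_add_right_Icc, sum_map, mul_sum]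
  simp only [addRightEmbedding_apply, pow_succ']

section lowerBound

variable (H : ℕ) (q δ p : ℝ) (o : ℕ → ℝ)

theorem lowerBoundS_self : lowerBoundS H q δ o H = 0 :=
  sum_eq_zero fun h hh ↦ by
    rw [Icc_eq_empty (by simp at hh; omega), sum_empty, zero_mul, zero_mul]

theorem lowerBoundS_eq_add_mul_succ {k : ℕ} (hk : 1 ≤ k) (hkH : k < H) :
    lowerBoundS H q δ o k = (∑ i ∈ Icc 1 (H - k), q ^ i) * (o k + δ) +
      q * (1 - o k - δ) * lowerBoundS H q δ o (k + 1) := by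
  rw [lowerBoundS, ← insert_Icc_add_one_left_eq_Icc (by omega : k ≤ H - 1),
    sum_insert (by simp), lowerBoundS, mul_sum, Nat.sub_self,
    Icc_eq_empty (by omega : ¬k ≤ k - 1), prod_empty, mul_one]
  congr 1
  refine sum_congr rfl fun h hh ↦ ?_
  rw [mem_Icc] at hh
  rw [show h - k + 1 = h - (k + 1) + 1 + 1 by omega, show H - k = H - (k + 1) + 1 by omega,
    sum_Icc_add_one_pow, ← insert_Icc_add_one_left_eq_Icc (by omega : k ≤ h - 1),
    prod_insert (by simp)]
  ring

theorem lowerBoundT_eq_lowerBoundS_const {k : ℕ} (hk : 1 ≤ k) :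
    lowerBoundT H q δ p k = lowerBoundS H q δ (fun _ ↦ p) k := by
  refine sum_congr rfl fun h hh ↦ ?_
  rw [mem_Icc] at hh
  rw [prod_const, Nat.card_Icc, show h - 1 + 1 - k = h - k by omega]

theorem lowerBoundT_sub_lowerBoundS_eq {k : ℕ} (hk : 1 ≤ k) (hkH : k < H) :
    lowerBoundT H q δ p k - lowerBoundS H q δ o k =
      (p - o k) * ((∑ i ∈ Icc 1 (H - k), q ^ i) - q * lowerBoundT H q δ p (k + 1)) +
        q * (1 - o k - δ) * (lowerBoundT H q δ p (k + 1) - lowerBoundS H q δ o (k + 1)) := by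
  simp only [lowerBoundT_eq_lowerBoundS_const H q δ p (by omega : 1 ≤ k),
    lowerBoundT_eq_lowerBoundS_const H q δ p (by omega : 1 ≤ k + 1),
    lowerBoundS_eq_add_mul_succ H q δ _ hk hkH]
  ring

end lowerBound

/-- With `S_k`, `T_k` as defined (and `S_H = T_H = 0`), the telescoping identity
`T_1 − S_1 = ∑_{h=1}^{H−1} (p − o_h)·(∑_{i=1}^{H−h} q^i − q·T_{h+1})·q^{h−1}·
∏_{j=1}^{h−1}(1 − o_j − δ)` holds. -/
theorem lowerBound_telescoping (H : ℕ) (hH : 2 ≤ H) (q δ p : ℝ) (o : ℕ → ℝ) :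
    lowerBoundT H q δ p 1 - lowerBoundS H q δ o 1 =
      ∑ h ∈ Finset.Icc 1 (H - 1),
        (p - o h) * ((∑ i ∈ Finset.Icc 1 (H - h), q ^ i) - q * lowerBoundT H q δ p (h + 1)) *
          q ^ (h - 1) * ∏ j ∈ Finset.Icc 1 (h - 1), (1 - o j - δ) := by
  have hH1 : 1 ≤ H := by omega
  have hunroll := eq_sum_prod_add_prod_mul_of_eq_add_mul
    (D := fun k ↦ lowerBoundT H q δ p k - lowerBoundS H q δ o k) hH1
    fun k hk hkH ↦ lowerBoundT_sub_lowerBoundS_eq H q δ p o hk hkH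
  have hlast : lowerBoundT H q δ p H - lowerBoundS H q δ o H = 0 := by
    rw [lowerBoundT_eq_lowerBoundS_const H q δ p hH1, lowerBoundS_self, lowerBoundS_self, sub_self]
  have hIcc (n : ℕ) (hn : 1 ≤ n) : Icc 1 (n - 1) = Ico 1 n :=
    Icc_sub_one_right_eq_Ico_of_not_isMin (by rw [isMin_iff_eq_bot, Nat.bot_eq_zero]; omega) 1
  rw [hunroll, hlast, mul_zero, add_zero, hIcc H hH1]
  refine sum_congr rfl fun h hh ↦ ?_
  rw [hIcc h (mem_Ico.1 hh).1, prod_mul_distrib, prod_const, Nat.card_Ico]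
  ring
end

section
/- Let H ≥ 6 be an integer, δ = 1/H, p a real with 0 ≤ p ≤ δ/3, ρ ∈ (0, 3/4], q = 1 − ρ, and h an integer with 1 ≤ h ≤ H/2. Then ∑_{i=1}^{H−h} q^i − T_{h+1} = q^{H−h} + ∑_{i=1}^{H−h−1} (q·(1−p−δ))^i, and ∑_{i=1}^{H−h} q^i − T_{h+1} ≥ (1/12) ∑_{i=1}^{H−h} q^i. -/
/-!
Write `c = 1 - p - δ`, so that `p + δ = 1 - c`. Exchanging the two sums in `T_{h+1}`, the
coefficient of `q^i` becomes `∑_{j<i} c^j (1 - c) = 1 - c^i`, which gives the identity. For the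
bound, `c ≥ 1 - 4/(3H)`, and `log (1 - t) ≥ -t/(1 - t)` gives `c^i ≥ c^H ≥ e^{-2} > 1/12` for
`i ≤ H`, so the right-hand side dominates `1/12` of `∑ q^i` term by term.
-/

open Finset

lemma sum_range_sum_Icc_mul_geom (q c : ℝ) (m : ℕ) :
    ∑ j ∈ range m, (∑ i ∈ Icc (j + 1) m, q ^ i) * c ^ j * (1 - c) =
      ∑ i ∈ Icc 1 m, q ^ i * (1 - c ^ i) := by
  simp_rw [sum_mul]
  rw [sum_comm' (t' := Icc 1 m) (s' := range)
    (h := by intros; simp only [mem_range, mem_Icc]; omega)]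
  refine sum_congr rfl fun i _ => ?_
  rw [← mul_neg_geom_sum, mul_sum, mul_sum]
  exact sum_congr rfl fun j _ => by ring

lemma lowerBoundT_eq_sum_range (H : ℕ) (q δ p : ℝ) {k : ℕ} (hk : 0 < k) :
    lowerBoundT H q δ p k =
      ∑ j ∈ range (H - k), (∑ i ∈ Icc (j + 1) (H - k), q ^ i) *
        (1 - p - δ) ^ j * (1 - (1 - p - δ)) := by
  have hIcc : Icc k (H - 1) = Ico k H := by ext; simp only [mem_Icc, mem_Ico]; omega
  rw [lowerBoundT, hIcc, sum_Ico_eq_sum_range]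
  refine sum_congr rfl fun j _ => ?_
  rw [Nat.add_sub_cancel_left]
  ring

lemma sum_pow_sub_lowerBoundT_succ (q δ p : ℝ) {H h : ℕ} (hh : h < H) :
    (∑ i ∈ Icc 1 (H - h), q ^ i) - lowerBoundT H q δ p (h + 1) =
      q ^ (H - h) + ∑ i ∈ Icc 1 (H - h - 1), (q * (1 - p - δ)) ^ i := by
  obtain ⟨m, hm⟩ : ∃ m, H - h = m + 1 := ⟨H - h - 1, by omega⟩
  rw [lowerBoundT_eq_sum_range H q δ p h.succ_pos, (by omega : H - (h + 1) = m), hm,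
    Nat.add_sub_cancel, sum_range_sum_Icc_mul_geom, sum_Icc_succ_top (by omega),
    add_sub_right_comm, ← sum_sub_distrib, add_comm]
  congr 1
  exact sum_congr rfl fun i _ => by rw [mul_pow]; ring

lemma exp_neg_div_one_sub_le {t : ℝ} (ht : t < 1) : Real.exp (-(t / (1 - t))) ≤ 1 - t := by
  have hpos : 0 < 1 - t := by linarith
  rw [← Real.le_log_iff_exp_le hpos]
  calc -(t / (1 - t)) = 1 - (1 - t)⁻¹ := by field_simp; ring
    _ ≤ Real.log (1 - t) := Real.one_sub_inv_le_log_of_pos hpos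

lemma one_div_twelve_le_pow {H : ℕ} (hH : 6 ≤ H) {c : ℝ} (hc : 1 - 4 / (3 * H) ≤ c) :
    1 / 12 ≤ c ^ H := by
  have hH' : (6 : ℝ) ≤ H := by exact_mod_cast hH
  set t : ℝ := 4 / (3 * H) with ht_def
  have ht : t ≤ 2 / 9 := by
    rw [div_le_div_iff₀ (by positivity) (by norm_num)]; linarith
  have hexp : Real.exp 2 < 9 := by
    rw [show (2 : ℝ) = 1 + 1 by norm_num, Real.exp_add]
    nlinarith [Real.exp_one_lt_three, Real.exp_pos 1]
  calc (1 / 12 : ℝ) ≤ Real.exp (-2) := by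
        rw [Real.exp_neg, inv_eq_one_div]
        gcongr; linarith
    _ ≤ Real.exp (-(t / (1 - t))) ^ H := by
        rw [← Real.exp_nat_mul]
        gcongr
        have hHt : (H : ℝ) * t = 4 / 3 := by rw [ht_def]; field_simp
        have h1t : 0 < 1 - t := by linarith
        rw [mul_neg, ← mul_div_assoc, hHt, neg_le_neg_iff, div_le_iff₀ h1t]
        linarith
    _ ≤ (1 - t) ^ H := by gcongr; exact exp_neg_div_one_sub_le (by linarith)
    _ ≤ c ^ H := by gcongr; linarith

lemma mul_sum_Icc_pow_le {q c a : ℝ} {n : ℕ} (hq : 0 ≤ q) (ha : a ≤ 1)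
    (hc : ∀ i < n, a ≤ c ^ i) :
    a * ∑ i ∈ Icc 1 n, q ^ i ≤ q ^ n + ∑ i ∈ Icc 1 (n - 1), (q * c) ^ i := by
  rcases n with _ | m
  · simp
  rw [Nat.add_sub_cancel, sum_Icc_succ_top (by omega), mul_add, mul_sum, add_comm]
  refine add_le_add (mul_le_of_le_one_left (by positivity) ha) (sum_le_sum fun i hi => ?_)
  calc a * q ^ i ≤ c ^ i * q ^ i := by gcongr; exact hc i (by simp only [mem_Icc] at hi; omega)
    _ = (q * c) ^ i := by rw [mul_pow, mul_comm]

theorem lowerBound_key_inequality_general (H : ℕ) (hH : 6 ≤ H) (p ρ : ℝ)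
    (hp0 : 0 ≤ p) (hp1 : p ≤ (1 / (H : ℝ)) / 3) (hρ1 : ρ ≤ 3 / 4)
    (h : ℕ) (hh2 : 2 * h ≤ H) :
    ((∑ i ∈ Finset.Icc 1 (H - h), (1 - ρ) ^ i)
        - lowerBoundT H (1 - ρ) (1 / (H : ℝ)) p (h + 1) =
      (1 - ρ) ^ (H - h) +
        ∑ i ∈ Finset.Icc 1 (H - h - 1), ((1 - ρ) * (1 - p - 1 / (H : ℝ))) ^ i) ∧
    (1 / 12 : ℝ) * (∑ i ∈ Finset.Icc 1 (H - h), (1 - ρ) ^ i) ≤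
      (∑ i ∈ Finset.Icc 1 (H - h), (1 - ρ) ^ i)
        - lowerBoundT H (1 - ρ) (1 / (H : ℝ)) p (h + 1) := by
  have hidentity := sum_pow_sub_lowerBoundT_succ (1 - ρ) (1 / (H : ℝ)) p (by omega : h < H)
  refine ⟨hidentity, hidentity ▸ ?_⟩
  have hH' : (6 : ℝ) ≤ H := by exact_mod_cast hH
  have hδ0 : 0 < 1 / (H : ℝ) := by positivity
  have hδ1 : 1 / (H : ℝ) ≤ 1 / 6 := by gcongr
  have hc1 : 1 - p - 1 / (H : ℝ) ≤ 1 := by linarith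
  have hc0 : 0 ≤ 1 - p - 1 / (H : ℝ) := by linarith
  have hcH : 1 / 12 ≤ (1 - p - 1 / (H : ℝ)) ^ H := by
    refine one_div_twelve_le_pow hH ?_
    have : 4 / (3 * (H : ℝ)) = 1 / H / 3 + 1 / H := by field_simp; ring
    linarith
  exact mul_sum_Icc_pow_le (by linarith) (by norm_num)
    fun i hi => hcH.trans (pow_le_pow_of_le_one hc0 hc1 (by omega))

/-- Let `H ≥ 6` be an integer, `δ = 1/H`, `p` a real with `0 ≤ p ≤ δ/3`, `ρ ∈ (0, 3/4]`,
`q = 1 − ρ`, and `h` an integer with `1 ≤ h ≤ H/2`. Then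
`∑_{i=1}^{H−h} q^i − T_{h+1} = q^{H−h} + ∑_{i=1}^{H−h−1} (q·(1−p−δ))^i`, and
`∑_{i=1}^{H−h} q^i − T_{h+1} ≥ (1/12) ∑_{i=1}^{H−h} q^i`. This is the key inequality in
the proof of Lemma E.1 of the paper. -/
theorem lowerBound_key_inequality (H : ℕ) (hH : 6 ≤ H) (p ρ : ℝ)
    (hp0 : 0 ≤ p) (hp1 : p ≤ (1 / (H : ℝ)) / 3) (hρ0 : 0 < ρ) (hρ1 : ρ ≤ 3 / 4)
    (h : ℕ) (hh1 : 1 ≤ h) (hh2 : 2 * h ≤ H) :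
    ((∑ i ∈ Finset.Icc 1 (H - h), (1 - ρ) ^ i)
        - lowerBoundT H (1 - ρ) (1 / (H : ℝ)) p (h + 1) =
      (1 - ρ) ^ (H - h) +
        ∑ i ∈ Finset.Icc 1 (H - h - 1), ((1 - ρ) * (1 - p - 1 / (H : ℝ))) ^ i) ∧
    (1 / 12 : ℝ) * (∑ i ∈ Finset.Icc 1 (H - h), (1 - ρ) ^ i) ≤
      (∑ i ∈ Finset.Icc 1 (H - h), (1 - ρ) ^ i)
        - lowerBoundT H (1 - ρ) (1 / (H : ℝ)) p (h + 1) :=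
  lowerBound_key_inequality_general H hH p ρ hp0 hp1 hρ1 h hh2
end
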